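/- arXiv:2108.05469 — 12 statements merged into one kernel-verified Lean document; each statement's English description precedes it below -/
import Mathlib

section
/- A finite two-person game form g is Nash-solvable if and only if it is zero-sum-solvable, if and only if it is ±1-solvable, if and only if it is tight. -/
/-- A Nash equilibrium of the game `(g; u, w)`: neither player can improve
by a unilateral deviation. -/
def IsNashEq {X Y Ω : Type*} (g : X × Y → Ω) (u w : Ω → ℝ) (x : X) (y : Y) : Prop :=
  (∀ x' : X, u (g (x', y)) ≤ u (g (x, y))) ∧ (∀ y' : Y, w (g (x, y')) ≤ w (g (x, y)))

/-- `g` is Nash-solvable: every game `(g; u, w)` has a Nash equilibrium. -/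
def NashSolvable {X Y Ω : Type*} (g : X × Y → Ω) : Prop :=
  ∀ u w : Ω → ℝ, ∃ x y, IsNashEq g u w x y

/-- `g` is zero-sum-solvable: every zero-sum game `(g; u, w)` has a Nash equilibrium. -/
def ZeroSumSolvable {X Y Ω : Type*} (g : X × Y → Ω) : Prop :=
  ∀ u w : Ω → ℝ, (∀ ω, u ω + w ω = 0) → ∃ x y, IsNashEq g u w x y

/-- `g` is `±1`-solvable: every zero-sum game with payoffs in `{−1, 1}` has a
Nash equilibrium. -/
def PlusMinusOneSolvable {X Y Ω : Type*} (g : X × Y → Ω) : Prop :=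
  ∀ u w : Ω → ℝ, (∀ ω, u ω + w ω = 0) → (∀ ω, u ω = 1 ∨ u ω = -1) →
    ∃ x y, IsNashEq g u w x y

/-- `g` is tight: the images of the graphs of any two response strategies intersect. -/
def TightGF {X Y Ω : Type*} (g : X × Y → Ω) : Prop :=
  ∀ (φ : X → Y) (ψ : Y → X), ∃ x y, g (x, φ x) = g (ψ y, y)

namespace GurvichAux

open Finset Classical

/-- A state of the iterated value-restriction process: a nonempty rectangle
of surviving strategies. -/
structure St (X Y : Type*) where
  A : Finset X
  B : Finset Y
  hA : A.Nonempty
  hB : B.Nonempty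

variable {X Y Ω : Type*} (g : X × Y → Ω) (u w : Ω → ℝ)

/-- Alice's guaranteed level of `u` when playing row `x` against columns in `s.B`. -/
noncomputable def mi (s : St X Y) (x : X) : ℝ :=
  s.B.inf' s.hB fun y => u (g (x, y))

/-- Alice's value of the current restricted game. -/
noncomputable def av (s : St X Y) : ℝ := s.A.sup' s.hA (mi g u s)

open Classical in
/-- The rows achieving Alice's value. -/
noncomputable def nA (s : St X Y) : Finset X :=
  s.A.filter fun x => av g u s ≤ mi g u s x

lemma nA_nonempty (s : St X Y) : (nA g u s).Nonempty := by
  obtain ⟨x, hx, hmax⟩ := Finset.exists_mem_eq_sup' s.hA (mi g u s)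
  exact ⟨x, Finset.mem_filter.2 ⟨hx, le_of_eq hmax⟩⟩

/-- Bob's guaranteed level of `w` when playing column `y` against rows in `nA`. -/
noncomputable def mw (s : St X Y) (y : Y) : ℝ :=
  (nA g u s).inf' (nA_nonempty g u s) fun x => w (g (x, y))

/-- Bob's value of the restricted game (after Alice's restriction). -/
noncomputable def bv (s : St X Y) : ℝ := s.B.sup' s.hB (mw g u w s)

open Classical in
/-- The columns achieving Bob's value. -/
noncomputable def nB (s : St X Y) : Finset Y :=
  s.B.filter fun y => bv g u w s ≤ mw g u w s y

lemma nB_nonempty (s : St X Y) : (nB g u w s).Nonempty := by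
  obtain ⟨y, hy, hmax⟩ := Finset.exists_mem_eq_sup' s.hB (mw g u w s)
  exact ⟨y, Finset.mem_filter.2 ⟨hy, le_of_eq hmax⟩⟩

/-- One round of the value-restriction process. -/
noncomputable def step (s : St X Y) : St X Y :=
  ⟨nA g u s, nB g u w s, nA_nonempty g u s, nB_nonempty g u w s⟩

variable [Fintype X] [Fintype Y] [Nonempty X] [Nonempty Y]

/-- The iterated process starting from the full strategy sets. -/
noncomputable def it : ℕ → St X Y
  | 0 => ⟨Finset.univ, Finset.univ, Finset.univ_nonempty, Finset.univ_nonempty⟩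
  | n + 1 => step g u w (it n)

/-- Surviving rows after `n` rounds. -/
noncomputable abbrev As (n : ℕ) : Finset X := (it g u w n).A
/-- Surviving columns after `n` rounds. -/
noncomputable abbrev Bs (n : ℕ) : Finset Y := (it g u w n).B
/-- Alice's value at round `n`. -/
noncomputable abbrev aS (n : ℕ) : ℝ := av g u (it g u w n)
/-- Bob's value at round `n`. -/
noncomputable abbrev bS (n : ℕ) : ℝ := bv g u w (it g u w n)

lemma As_succ (n : ℕ) : As g u w (n + 1) = nA g u (it g u w n) := rfl
lemma Bs_succ (n : ℕ) : Bs g u w (n + 1) = nB g u w (it g u w n) := rfl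

lemma As_succ_subset (n : ℕ) : As g u w (n + 1) ⊆ As g u w n :=
  Finset.filter_subset _ _

lemma Bs_succ_subset (n : ℕ) : Bs g u w (n + 1) ⊆ Bs g u w n :=
  Finset.filter_subset _ _

/-- `inf'` over a larger set is smaller. -/
lemma inf'_anti {α β : Type*} [SemilatticeInf β] {s t : Finset α} (hst : s ⊆ t)
    (hs : s.Nonempty) (ht : t.Nonempty) (f : α → β) :
    t.inf' ht f ≤ s.inf' hs f :=
  Finset.le_inf' hs f fun b hb => Finset.inf'_le f (hst hb)

/-- Floor for `u`: surviving rows guarantee the current value against previous columns. -/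
lemma floor_u {n : ℕ} {x : X} {y : Y} (hx : x ∈ As g u w (n + 1)) (hy : y ∈ Bs g u w n) :
    aS g u w n ≤ u (g (x, y)) := by
  have h1 : aS g u w n ≤ mi g u (it g u w n) x := (Finset.mem_filter.1 hx).2
  exact h1.trans (Finset.inf'_le _ hy)

/-- Floor for `w`: surviving columns guarantee Bob's value against surviving rows. -/
lemma floor_w {n : ℕ} {x : X} {y : Y} (hx : x ∈ As g u w (n + 1)) (hy : y ∈ Bs g u w (n + 1)) :
    bS g u w n ≤ w (g (x, y)) := by
  have h1 : bS g u w n ≤ mw g u w (it g u w n) y := (Finset.mem_filter.1 hy).2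
  exact h1.trans (Finset.inf'_le _ hx)

lemma aS_mono : Monotone (aS g u w) := by
  apply monotone_nat_of_le_succ
  intro n
  obtain ⟨x, hx⟩ := (it g u w (n + 1)).hA
  have hx' : x ∈ nA g u (it g u w n) := hx
  have h1 : aS g u w n ≤ mi g u (it g u w n) x := (Finset.mem_filter.1 hx').2
  have h2 : mi g u (it g u w n) x ≤ mi g u (it g u w (n + 1)) x :=
    inf'_anti (Bs_succ_subset g u w n) _ _ _
  have h3 : mi g u (it g u w (n + 1)) x ≤ aS g u w (n + 1) := Finset.le_sup' _ hx
  linarith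

lemma bS_mono : Monotone (bS g u w) := by
  apply monotone_nat_of_le_succ
  intro n
  obtain ⟨y, hy⟩ := (it g u w (n + 1)).hB
  have hy' : y ∈ nB g u w (it g u w n) := hy
  have h1 : bS g u w n ≤ mw g u w (it g u w n) y := (Finset.mem_filter.1 hy').2
  have h2 : mw g u w (it g u w n) y ≤ mw g u w (it g u w (n + 1)) y := by
    apply inf'_anti _ _ _ _
    · -- nA (it (n+1)) ⊆ nA (it n)
      intro x hx
      have hx1 : x ∈ As g u w (n + 2) := hx
      have hx2 : x ∈ As g u w (n + 1) := As_succ_subset g u w (n + 1) hx1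
      exact hx2
  have h3 : mw g u w (it g u w (n + 1)) y ≤ bS g u w (n + 1) := Finset.le_sup' _ hy
  linarith

/-- Rows discarded at round `n` have a witness column showing they fail the value. -/
lemma discard_x {n : ℕ} {x : X} (hx : x ∈ As g u w n) (hx' : x ∉ As g u w (n + 1)) :
    ∃ y ∈ Bs g u w n, u (g (x, y)) < aS g u w n := by
  have hlt : mi g u (it g u w n) x < aS g u w n := by
    by_contra h
    push_neg at h
    exact hx' (Finset.mem_filter.2 ⟨hx, h⟩)
  obtain ⟨y, hy, hye⟩ := Finset.exists_mem_eq_inf' (it g u w n).hB fun y => u (g (x, y))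
  exact ⟨y, hy, by rw [← hye]; exact hlt⟩

/-- Columns discarded at round `n` have a witness row showing they fail Bob's value. -/
lemma discard_y {n : ℕ} {y : Y} (hy : y ∈ Bs g u w n) (hy' : y ∉ Bs g u w (n + 1)) :
    ∃ x ∈ As g u w (n + 1), w (g (x, y)) < bS g u w n := by
  have hlt : mw g u w (it g u w n) y < bS g u w n := by
    by_contra h
    push_neg at h
    exact hy' (Finset.mem_filter.2 ⟨hy, h⟩)
  obtain ⟨x, hx, hxe⟩ :=
    Finset.exists_mem_eq_inf' (nA_nonempty g u (it g u w n)) fun x => w (g (x, y))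
  exact ⟨x, hx, by rw [← hxe]; exact hlt⟩

lemma exists_discard_x {T : ℕ} {x : X} (hx : x ∉ As g u w T) :
    ∃ t < T, x ∈ As g u w t ∧ x ∉ As g u w (t + 1) := by
  induction T with
  | zero => exact absurd (Finset.mem_univ x) hx
  | succ T ih =>
    by_cases h : x ∈ As g u w T
    · exact ⟨T, Nat.lt_succ_self T, h, hx⟩
    · obtain ⟨t, ht, h1, h2⟩ := ih h
      exact ⟨t, ht.trans (Nat.lt_succ_self T), h1, h2⟩

lemma exists_discard_y {T : ℕ} {y : Y} (hy : y ∉ Bs g u w T) :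
    ∃ t < T, y ∈ Bs g u w t ∧ y ∉ Bs g u w (t + 1) := by
  induction T with
  | zero => exact absurd (Finset.mem_univ y) hy
  | succ T ih =>
    by_cases h : y ∈ Bs g u w T
    · exact ⟨T, Nat.lt_succ_self T, h, hy⟩
    · obtain ⟨t, ht, h1, h2⟩ := ih h
      exact ⟨t, ht.trans (Nat.lt_succ_self T), h1, h2⟩

/-- The process stabilizes. -/
lemma exists_fix : ∃ T, As g u w (T + 1) = As g u w T ∧ Bs g u w (T + 1) = Bs g u w T := by
  set f : ℕ → ℕ := fun n => (As g u w n).card + (Bs g u w n).card with hf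
  have hmono : ∀ n, f (n + 1) ≤ f n := fun n =>
    Nat.add_le_add (Finset.card_le_card (As_succ_subset g u w n))
      (Finset.card_le_card (Bs_succ_subset g u w n))
  have hstall : ∃ n, f (n + 1) = f n := by
    by_contra h
    push_neg at h
    have hdesc : ∀ n, f n + n ≤ f 0 := by
      intro n
      induction n with
      | zero => simp
      | succ n ih =>
        have h1 := hmono n
        have h2 := h n
        omega
    have := hdesc (f 0 + 1)
    omega
  obtain ⟨T, hT⟩ := hstall
  have hcA : (As g u w (T + 1)).card ≤ (As g u w T).card :=
    Finset.card_le_card (As_succ_subset g u w T)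
  have hcB : (Bs g u w (T + 1)).card ≤ (Bs g u w T).card :=
    Finset.card_le_card (Bs_succ_subset g u w T)
  have hT' : (As g u w (T + 1)).card + (Bs g u w (T + 1)).card
      = (As g u w T).card + (Bs g u w T).card := hT
  refine ⟨T, ?_, ?_⟩
  · exact Finset.eq_of_subset_of_card_le (As_succ_subset g u w T) (by omega)
  · exact Finset.eq_of_subset_of_card_le (Bs_succ_subset g u w T) (by omega)

/-- At a fixpoint, every surviving row attains Alice's value against some surviving column. -/
lemma attain_u {T : ℕ} (hAfix : As g u w (T + 1) = As g u w T) {x : X}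
    (hx : x ∈ As g u w T) :
    ∃ y ∈ Bs g u w T, u (g (x, y)) = aS g u w T := by
  have hx1 : x ∈ As g u w (T + 1) := hAfix ▸ hx
  have h1 : aS g u w T ≤ mi g u (it g u w T) x := (Finset.mem_filter.1 hx1).2
  have h2 : mi g u (it g u w T) x ≤ aS g u w T := Finset.le_sup' _ hx
  obtain ⟨y, hy, hye⟩ := Finset.exists_mem_eq_inf' (it g u w T).hB fun y => u (g (x, y))
  have hye' : mi g u (it g u w T) x = u (g (x, y)) := hye
  exact ⟨y, hy, by rw [← hye']; linarith⟩

/-- At a fixpoint, every surviving column attains Bob's value against some surviving row. -/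
lemma attain_w {T : ℕ} (hAfix : As g u w (T + 1) = As g u w T)
    (hBfix : Bs g u w (T + 1) = Bs g u w T) {y : Y} (hy : y ∈ Bs g u w T) :
    ∃ x ∈ As g u w T, w (g (x, y)) = bS g u w T := by
  have hy1 : y ∈ Bs g u w (T + 1) := hBfix ▸ hy
  have h1 : bS g u w T ≤ mw g u w (it g u w T) y := (Finset.mem_filter.1 hy1).2
  have h2 : mw g u w (it g u w T) y ≤ bS g u w T := Finset.le_sup' _ hy
  obtain ⟨x, hx, hxe⟩ :=
    Finset.exists_mem_eq_inf' (nA_nonempty g u (it g u w T)) fun x => w (g (x, y))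
  have hxe' : mw g u w (it g u w T) y = w (g (x, y)) := hxe
  have hx' : x ∈ As g u w T := hAfix ▸ (hx : x ∈ As g u w (T + 1))
  exact ⟨x, hx', by rw [← hxe']; linarith⟩

end GurvichAux

open GurvichAux in
/-- The hard direction of Gurvich's theorem: a tight game form is Nash-solvable. -/
theorem TightGF.nashSolvable {X Y Ω : Type*} [Fintype X] [Fintype Y]
    [Nonempty X] [Nonempty Y] {g : X × Y → Ω} (hg : TightGF g) : NashSolvable g := by
  intro u w
  obtain ⟨T, hAfix, hBfix⟩ := exists_fix g u w
  -- Claim A: some surviving column caps `u` at Alice's value over ALL rows.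
  have claimA : ∃ y ∈ Bs g u w T, ∀ x : X, u (g (x, y)) ≤ aS g u w T := by
    by_contra hc
    push_neg at hc
    have hφ : ∀ x : X, ∃ y : Y,
        (x ∈ As g u w T ∧ y ∈ Bs g u w T ∧ u (g (x, y)) ≤ aS g u w T) ∨
        (∃ t < T, x ∈ As g u w t ∧ y ∈ Bs g u w t ∧ u (g (x, y)) < aS g u w t) := by
      intro x
      by_cases hx : x ∈ As g u w T
      · obtain ⟨y, hy, hye⟩ := attain_u g u w hAfix hx
        exact ⟨y, Or.inl ⟨hx, hy, le_of_eq hye⟩⟩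
      · obtain ⟨t, ht, h1, h2⟩ := exists_discard_x g u w hx
        obtain ⟨y, hy, hye⟩ := discard_x g u w h1 h2
        exact ⟨y, Or.inr ⟨t, ht, h1, hy, hye⟩⟩
    have hψ : ∀ y : Y, ∃ x : X,
        (y ∈ Bs g u w T ∧ aS g u w T < u (g (x, y))) ∨
        (∃ r < T, y ∈ Bs g u w r ∧ x ∈ As g u w (r + 1) ∧ w (g (x, y)) < bS g u w r) := by
      intro y
      by_cases hy : y ∈ Bs g u w T
      · obtain ⟨x, hx⟩ := hc y hy
        exact ⟨x, Or.inl ⟨hy, hx⟩⟩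
      · obtain ⟨r, hr, h1, h2⟩ := exists_discard_y g u w hy
        obtain ⟨x, hx, hxe⟩ := discard_y g u w h1 h2
        exact ⟨x, Or.inr ⟨r, hr, h1, hx, hxe⟩⟩
    choose φ hφs using hφ
    choose ψ hψs using hψ
    obtain ⟨x, y, hxy⟩ := hg φ ψ
    rcases hφs x with ⟨hxA, hφB, hu1⟩ | ⟨t, htT, hxAt, hφBt, hu1⟩ <;>
      rcases hψs y with ⟨hyB, hu2⟩ | ⟨r, hrT, hyBr, hψA, hw2⟩
    · rw [hxy] at hu1; linarith
    · -- x alive, y discarded at r : w-floor at T vs w < bS r ≤ bS T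
      have hw1 : bS g u w T ≤ w (g (x, φ x)) :=
        floor_w g u w (hAfix ▸ hxA) (hBfix ▸ hφB)
      rw [hxy] at hw1
      have := bS_mono g u w (le_of_lt hrT)
      linarith
    · -- x discarded at t, y alive : u < aS t ≤ aS T < u
      rw [hxy] at hu1
      have := aS_mono g u w (le_of_lt htT)
      linarith
    · -- both discarded
      have hu3 : aS g u w r ≤ u (g (ψ y, y)) := floor_u g u w hψA hyBr
      rw [← hxy] at hu3
      have hrt : r < t := by
        by_contra h
        push_neg at h
        have := aS_mono g u w h
        linarith
      obtain ⟨t', rfl⟩ : ∃ t', t = t' + 1 := ⟨t - 1, by omega⟩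
      have hw1 : bS g u w t' ≤ w (g (x, φ x)) := floor_w g u w hxAt hφBt
      rw [hxy] at hw1
      have := bS_mono g u w (show r ≤ t' by omega)
      linarith
  -- Claim B: some surviving row caps `w` at Bob's value over ALL columns.
  have claimB : ∃ x ∈ As g u w T, ∀ y : Y, w (g (x, y)) ≤ bS g u w T := by
    by_contra hc
    push_neg at hc
    have hφ : ∀ x : X, ∃ y : Y,
        (x ∈ As g u w T ∧ bS g u w T < w (g (x, y))) ∨
        (∃ t < T, x ∈ As g u w t ∧ y ∈ Bs g u w t ∧ u (g (x, y)) < aS g u w t) := by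
      intro x
      by_cases hx : x ∈ As g u w T
      · obtain ⟨y, hy⟩ := hc x hx
        exact ⟨y, Or.inl ⟨hx, hy⟩⟩
      · obtain ⟨t, ht, h1, h2⟩ := exists_discard_x g u w hx
        obtain ⟨y, hy, hye⟩ := discard_x g u w h1 h2
        exact ⟨y, Or.inr ⟨t, ht, h1, hy, hye⟩⟩
    have hψ : ∀ y : Y, ∃ x : X,
        (y ∈ Bs g u w T ∧ x ∈ As g u w T ∧ w (g (x, y)) ≤ bS g u w T) ∨
        (∃ r < T, y ∈ Bs g u w r ∧ x ∈ As g u w (r + 1) ∧ w (g (x, y)) < bS g u w r) := by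
      intro y
      by_cases hy : y ∈ Bs g u w T
      · obtain ⟨x, hx, hxe⟩ := attain_w g u w hAfix hBfix hy
        exact ⟨x, Or.inl ⟨hy, hx, le_of_eq hxe⟩⟩
      · obtain ⟨r, hr, h1, h2⟩ := exists_discard_y g u w hy
        obtain ⟨x, hx, hxe⟩ := discard_y g u w h1 h2
        exact ⟨x, Or.inr ⟨r, hr, h1, hx, hxe⟩⟩
    choose φ hφs using hφ
    choose ψ hψs using hψ
    obtain ⟨x, y, hxy⟩ := hg φ ψ
    rcases hφs x with ⟨hxA, hw1⟩ | ⟨t, htT, hxAt, hφBt, hu1⟩ <;>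
      rcases hψs y with ⟨hyB, hψA, hw2⟩ | ⟨r, hrT, hyBr, hψA, hw2⟩
    · rw [hxy] at hw1; linarith
    · -- x alive, y discarded at r : w > bS T ≥ bS r > w
      rw [hxy] at hw1
      have := bS_mono g u w (le_of_lt hrT)
      linarith
    · -- x discarded at t, y alive : u-floor at T vs u < aS t ≤ aS T
      have hu3 : aS g u w T ≤ u (g (ψ y, y)) := floor_u g u w (hAfix ▸ hψA) hyB
      rw [← hxy] at hu3
      have := aS_mono g u w (le_of_lt htT)
      linarith
    · -- both discarded (same as in Claim A)
      have hu3 : aS g u w r ≤ u (g (ψ y, y)) := floor_u g u w hψA hyBr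
      rw [← hxy] at hu3
      have hrt : r < t := by
        by_contra h
        push_neg at h
        have := aS_mono g u w h
        linarith
      obtain ⟨t', rfl⟩ : ∃ t', t = t' + 1 := ⟨t - 1, by omega⟩
      have hw1 : bS g u w t' ≤ w (g (x, φ x)) := floor_w g u w hxAt hφBt
      rw [hxy] at hw1
      have := bS_mono g u w (show r ≤ t' by omega)
      linarith
  obtain ⟨ystar, hyB, hyCap⟩ := claimA
  obtain ⟨xstar, hxA, hxCap⟩ := claimB
  refine ⟨xstar, ystar, fun x' => ?_, fun y' => ?_⟩
  · exact (hyCap x').trans (floor_u g u w (hAfix ▸ hxA) hyB)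
  · exact (hxCap y').trans (floor_w g u w (hAfix ▸ hxA) (hBfix ▸ hyB))

/-- `±1`-solvability implies tightness. -/
theorem PlusMinusOneSolvable.tight {X Y Ω : Type*} [Fintype Y] {g : X × Y → Ω}
    (h : PlusMinusOneSolvable g) : TightGF g := by
  classical
  intro φ ψ
  set A : Finset Ω := Finset.univ.image (fun y : Y => g (ψ y, y)) with hA
  set u : Ω → ℝ := fun ω => if ω ∈ A then 1 else -1 with hu
  set w : Ω → ℝ := fun ω => if ω ∈ A then -1 else 1 with hw
  have hzero : ∀ ω, u ω + w ω = 0 := by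
    intro ω; simp only [hu, hw]; by_cases hωA : ω ∈ A <;> simp [hωA]
  have hpm : ∀ ω, u ω = 1 ∨ u ω = -1 := by
    intro ω; simp only [hu]; by_cases hωA : ω ∈ A <;> simp [hωA]
  obtain ⟨x, y, hNE⟩ := h u w hzero hpm
  by_cases hxy : g (x, y) ∈ A
  · -- Bob cannot improve, so `g (x, φ x)` must be in `A` as well.
    have h1 : w (g (x, φ x)) ≤ w (g (x, y)) := hNE.2 (φ x)
    have h2 : w (g (x, y)) = -1 := by simp [hw, hxy]
    have h3 : g (x, φ x) ∈ A := by
      by_contra hn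
      have : w (g (x, φ x)) = 1 := by simp [hw, hn]
      rw [this, h2] at h1; norm_num at h1
    obtain ⟨y₀, _, hy₀⟩ := Finset.mem_image.1 h3
    exact ⟨x, y₀, hy₀.symm⟩
  · -- Alice could improve by moving to `ψ y`, contradiction.
    have h1 : u (g (ψ y, y)) ≤ u (g (x, y)) := hNE.1 (ψ y)
    have h2 : u (g (x, y)) = -1 := by simp [hu, hxy]
    have h3 : g (ψ y, y) ∈ A := Finset.mem_image.2 ⟨y, Finset.mem_univ y, rfl⟩
    have h4 : u (g (ψ y, y)) = 1 := by simp [hu, h3]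
    rw [h4, h2] at h1; norm_num at h1

/-- For a finite two-person game form `g`, Nash-solvability,
zero-sum-solvability, `±1`-solvability and tightness are all equivalent. -/
theorem nashSolvable_iff_zeroSumSolvable_iff_pmOneSolvable_iff_tight
    {X Y Ω : Type*} [Fintype X] [Fintype Y] [Fintype Ω]
    [Nonempty X] [Nonempty Y]
    (g : X × Y → Ω) (hsurj : Function.Surjective g) :
    (NashSolvable g ↔ ZeroSumSolvable g) ∧
    (ZeroSumSolvable g ↔ PlusMinusOneSolvable g) ∧
    (PlusMinusOneSolvable g ↔ TightGF g) := by
  have h1 : NashSolvable g → ZeroSumSolvable g := fun h u w _ => h u w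
  have h2 : ZeroSumSolvable g → PlusMinusOneSolvable g := fun h u w h0 _ => h u w h0
  have h3 : PlusMinusOneSolvable g → TightGF g := PlusMinusOneSolvable.tight
  have h4 : TightGF g → NashSolvable g := TightGF.nashSolvable
  exact ⟨⟨h1, fun h => h4 (h3 (h2 h))⟩,
    ⟨h2, fun h => h1 (h4 (h3 h))⟩,
    ⟨h3, fun h => h2 (h1 (h4 h))⟩⟩
end

section
/- If a finite two-person game form g : X × Y → Ω is not tight, then there exists a partition Ω = Ω_A ∪ Ω_B such that the zero-sum ±1 game (g; Ω_A, Ω_B), in which Alice wins on outcomes of Ω_A and Bob wins on outcomes of Ω_B, has no Nash equilibrium (saddle point) in pure strategies; that is, a game form that is not tight is not ±1-solvable. -/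
/-- If a finite two-person game form is not tight, then there is a
partition `Ω = Ω_A ∪ Ω_B` such that the zero-sum `±1` game `(g; Ω_A, Ω_B)` (Alice wins
on `Ω_A`, Bob wins on `Ω_B`) has no Nash equilibrium in pure strategies: a game form
that is not tight is not `±1`-solvable. -/
theorem not_tight_not_pmOne_solvable
    {X Y Ω : Type*} [Fintype X] [Fintype Y] [Fintype Ω]
    [Nonempty X] [Nonempty Y]
    (g : X × Y → Ω) (hsurj : Function.Surjective g)
    (hnt : ¬ TightGF g) :
    ∃ ΩA ΩB : Set Ω, ΩA ∪ ΩB = Set.univ ∧ ΩA ∩ ΩB = ∅ ∧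
      ∀ u w : Ω → ℝ,
        (∀ ω ∈ ΩA, u ω = 1 ∧ w ω = -1) →
        (∀ ω ∈ ΩB, u ω = -1 ∧ w ω = 1) →
        ¬ ∃ x y, IsNashEq g u w x y := by
  simp only [TightGF, not_forall, not_exists] at hnt
  obtain ⟨φ, ψ, hdisj⟩ := hnt
  set ΩB : Set Ω := Set.range (fun x => g (x, φ x)) with hΩB
  refine ⟨ΩBᶜ, ΩB, by simp, by simp, ?_⟩
  rintro u w hA hB ⟨x, y, hne⟩
  -- Bob can deviate to φ x, giving outcome in ΩB where w = 1
  have hwB : w (g (x, φ x)) = 1 := (hB _ ⟨x, rfl⟩).2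
  have hw1 : (1 : ℝ) ≤ w (g (x, y)) := hwB ▸ hne.2 (φ x)
  -- Alice can deviate to ψ y, giving outcome in ΩA where u = 1
  have hmem : g (ψ y, y) ∈ ΩBᶜ := by
    rintro ⟨x', hx'⟩
    exact hdisj x' y hx'
  have huA : u (g (ψ y, y)) = 1 := (hA _ hmem).1
  have hu1 : (1 : ℝ) ≤ u (g (x, y)) := huA ▸ hne.1 (ψ y)
  by_cases h : g (x, y) ∈ ΩB
  · have := (hB _ h).1
    linarith
  · have := (hA _ h).2
    linarith
end

section
/- If a finite two-person game form g : X × Y → Ω is tight, then for every zero-sum payoff pair (u, w) with u + w = 0 the game (g; u, w) has a saddle point; moreover, it has a simple saddle point (x, y) (one with g(x) ∩ g(y) = {g(x,y)}) in which both strategies x and y are minimal. -/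
/-- The support of Alice's strategy `x`: all outcomes reachable in row `x`. -/
def suppA {X Y Ω : Type*} (g : X × Y → Ω) (x : X) : Set Ω := {ω | ∃ y, g (x, y) = ω}

/-- The support of Bob's strategy `y`: all outcomes reachable in column `y`. -/
def suppB {X Y Ω : Type*} (g : X × Y → Ω) (y : Y) : Set Ω := {ω | ∃ x, g (x, y) = ω}

/-- A tight finite two-person game form is zero-sum-solvable;
moreover each zero-sum game on it has a simple saddle point `(x, y)`
(`g(x) ∩ g(y) = {g(x,y)}`) in which both strategies are minimal. -/
theorem tight_zeroSum_simple_minimal_saddle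
    {X Y Ω : Type*} [Fintype X] [Fintype Y] [Fintype Ω]
    [Nonempty X] [Nonempty Y]
    (g : X × Y → Ω) (hsurj : Function.Surjective g)
    (ht : TightGF g)
    (u w : Ω → ℝ) (hzs : ∀ ω, u ω + w ω = 0) :
    ∃ x y, IsNashEq g u w x y ∧
      suppA g x ∩ suppB g y = {g (x, y)} ∧
      (∀ x' : X, ¬ suppA g x' ⊂ suppA g x) ∧
      (∀ y' : Y, ¬ suppB g y' ⊂ suppB g y) := by
  classical
  -- build an injective refinement u' of u
  obtain ⟨u', hinj, hmono⟩ : ∃ u' : Ω → ℝ, Function.Injective u' ∧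
      ∀ a b, u a < u b → u' a < u' b := by
    set n := Fintype.card Ω with hn
    set e := Fintype.equivFin Ω with he
    set N : Ω → ℕ := fun ω => (Finset.univ.filter fun ω' => u ω' < u ω).card with hN
    have hNmono : ∀ a b, u a < u b → N a < N b := by
      intro a b hab
      apply Finset.card_lt_card
      constructor
      · intro ω hω
        simp only [Finset.mem_filter, Finset.mem_univ, true_and] at hω ⊢
        linarith
      · intro hsub
        have := hsub (Finset.mem_filter.mpr ⟨Finset.mem_univ a, hab⟩)
        simp only [Finset.mem_filter, Finset.mem_univ, true_and] at this
        linarith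
    set U : Ω → ℕ := fun ω => (e ω : ℕ) + N ω * (n + 1) with hU
    have hUe : ∀ ω, (e ω : ℕ) < n + 1 := fun ω => Nat.lt_succ_of_lt (e ω).isLt
    have hUmono : ∀ a b, u a < u b → U a < U b := by
      intro a b hab
      have h1 := hNmono a b hab
      have h2 := hUe a
      simp only [hU]
      calc (e a : ℕ) + N a * (n+1) < (n+1) + N a * (n+1) := by omega
        _ = (N a + 1) * (n+1) := by ring
        _ ≤ N b * (n+1) := Nat.mul_le_mul_right _ h1
        _ ≤ (e b : ℕ) + N b * (n+1) := Nat.le_add_left _ _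
    refine ⟨fun ω => (U ω : ℝ), ?_, ?_⟩
    · intro a b hab
      have hUab : U a = U b := by
        exact_mod_cast show ((U a : ℝ)) = (U b : ℝ) from hab
      have ha := hUe a; have hb := hUe b
      have hma : (e a : ℕ) = U a % (n + 1) := by
        simp only [hU, Nat.add_mul_mod_self_right]
        exact (Nat.mod_eq_of_lt ha).symm
      have hmb : (e b : ℕ) = U b % (n + 1) := by
        simp only [hU, Nat.add_mul_mod_self_right]
        exact (Nat.mod_eq_of_lt hb).symm
      have heab : (e a : ℕ) = (e b : ℕ) := by rw [hma, hmb, hUab]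
      exact e.injective (Fin.ext heab)
    · intro a b hab
      show ((U a : ℝ)) < (U b : ℝ)
      exact_mod_cast hUmono a b hab
  have hw : ∀ ω, w ω = -u ω := fun ω => by linarith [hzs ω]
  have hYne : (Finset.univ : Finset Y).Nonempty := Finset.univ_nonempty
  have hXne : (Finset.univ : Finset X).Nonempty := Finset.univ_nonempty
  set m : X → ℝ := fun x => Finset.univ.inf' hYne (fun y => u' (g (x, y))) with hm
  obtain ⟨x₀, -, hx₀⟩ := Finset.exists_max_image (Finset.univ : Finset X) m hXne
  set v := m x₀ with hv
  -- every outcome in row x₀ has value ≥ v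
  have hrow₀ : ∀ ω ∈ suppA g x₀, v ≤ u' ω := by
    rintro ω ⟨y, rfl⟩
    exact Finset.inf'_le _ (Finset.mem_univ y)
  -- there is a column y₀ with all values ≤ v
  obtain ⟨y₀, hy₀⟩ : ∃ y₀, ∀ x, u' (g (x, y₀)) ≤ v := by
    by_contra h
    push_neg at h
    choose ψ hψ using h
    have hφ : ∀ x, ∃ y, u' (g (x, y)) ≤ v := by
      intro x
      obtain ⟨y, -, hy⟩ := Finset.exists_mem_eq_inf' hYne (fun y => u' (g (x, y)))
      exact ⟨y, by rw [← hy]; exact hx₀ x (Finset.mem_univ x)⟩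
    choose φ hφ using hφ
    obtain ⟨x, y, heq⟩ := ht φ ψ
    have h1 := hφ x
    rw [heq] at h1
    linarith [hψ y]
  have hcol₀ : ∀ ω ∈ suppB g y₀, u' ω ≤ v := by
    rintro ω ⟨x, rfl⟩; exact hy₀ x
  -- pick a minimal row inside row x₀'s support family
  obtain ⟨x, hxmem, hxmin⟩ := Finset.exists_min_image
    (Finset.univ.filter fun x' => suppA g x' ⊆ suppA g x₀)
    (fun x' => (suppA g x').toFinset.card)
    ⟨x₀, Finset.mem_filter.mpr ⟨Finset.mem_univ _, subset_rfl⟩⟩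
  have hxsub : suppA g x ⊆ suppA g x₀ := (Finset.mem_filter.mp hxmem).2
  have hxminimal : ∀ x' : X, ¬ suppA g x' ⊂ suppA g x := by
    intro x' hss
    have hsub' : suppA g x' ⊆ suppA g x₀ := hss.subset.trans hxsub
    have hlt : (suppA g x').toFinset.card < (suppA g x).toFinset.card :=
      Finset.card_lt_card (Set.toFinset_ssubset_toFinset.mpr hss)
    have := hxmin x' (Finset.mem_filter.mpr ⟨Finset.mem_univ _, hsub'⟩)
    omega
  have hrow : ∀ ω ∈ suppA g x, v ≤ u' ω := fun ω hω => hrow₀ ω (hxsub hω)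
  -- pick a minimal column inside column y₀'s support family
  obtain ⟨y, hymem, hymin⟩ := Finset.exists_min_image
    (Finset.univ.filter fun y' => suppB g y' ⊆ suppB g y₀)
    (fun y' => (suppB g y').toFinset.card)
    ⟨y₀, Finset.mem_filter.mpr ⟨Finset.mem_univ _, subset_rfl⟩⟩
  have hysub : suppB g y ⊆ suppB g y₀ := (Finset.mem_filter.mp hymem).2
  have hyminimal : ∀ y' : Y, ¬ suppB g y' ⊂ suppB g y := by
    intro y' hss
    have hsub' : suppB g y' ⊆ suppB g y₀ := hss.subset.trans hysub
    have hlt : (suppB g y').toFinset.card < (suppB g y).toFinset.card :=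
      Finset.card_lt_card (Set.toFinset_ssubset_toFinset.mpr hss)
    have := hymin y' (Finset.mem_filter.mpr ⟨Finset.mem_univ _, hsub'⟩)
    omega
  have hcol : ∀ ω ∈ suppB g y, u' ω ≤ v := fun ω hω => hcol₀ ω (hysub hω)
  -- g (x, y) has value exactly v
  have hxyA : g (x, y) ∈ suppA g x := ⟨y, rfl⟩
  have hxyB : g (x, y) ∈ suppB g y := ⟨x, rfl⟩
  have hval : u' (g (x, y)) = v := le_antisymm (hcol _ hxyB) (hrow _ hxyA)
  refine ⟨x, y, ⟨?_, ?_⟩, ?_, hxminimal, hyminimal⟩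
  · intro x'
    by_contra h
    push_neg at h
    have h1 : u' (g (x, y)) < u' (g (x', y)) := hmono _ _ h
    have h2 : u' (g (x', y)) ≤ v := hcol _ ⟨x', rfl⟩
    linarith
  · intro y'
    rw [hw, hw]
    by_contra h
    push_neg at h
    have h' : u (g (x, y')) < u (g (x, y)) := by linarith
    have h1 : u' (g (x, y')) < u' (g (x, y)) := hmono _ _ h'
    have h2 : v ≤ u' (g (x, y')) := hrow _ ⟨y', rfl⟩
    linarith [hval.ge, hval.le]
  · ext ω
    simp only [Set.mem_inter_iff, Set.mem_singleton_iff]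
    constructor
    · rintro ⟨hA, hB⟩
      have h1 : v ≤ u' ω := hrow _ hA
      have h2 : u' ω ≤ v := hcol _ hB
      exact hinj (by rw [hval]; linarith)
    · rintro rfl
      exact ⟨hxyA, hxyB⟩
end

section
/- Lexicographical theorem: let 𝒜 and ℬ be dual multi-hypergraphs on a finite ground set Ω equipped with a linear order ≻, and let A^L ∈ 𝒜 be an edge that is lexicographically maximal with respect to the induced lexicographic order ≻_ℓ on subsets. Then A^L is a minimal edge of 𝒜, and for every ω* ∈ A^L there exists an edge B ∈ ℬ such that A^L ∩ B = {ω*} and ω* ≻ ω for every ω ∈ B \ {ω*}. -/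
/-- `𝒜` and `ℬ` are dual multi-hypergraphs on the ground set `Ω`: every pair of
edges intersects, and every transversal of one family contains an edge of the other. -/
def DualHypergraphs {Ω : Type*} (𝒜 ℬ : Set (Set Ω)) : Prop :=
  (∀ A ∈ 𝒜, ∀ B ∈ ℬ, (A ∩ B).Nonempty) ∧
  (∀ T : Set Ω, (∀ B ∈ ℬ, (T ∩ B).Nonempty) → ∃ A ∈ 𝒜, A ⊆ T) ∧
  (∀ T : Set Ω, (∀ A ∈ 𝒜, (T ∩ A).Nonempty) → ∃ B ∈ ℬ, B ⊆ T)

/-- `S` is lexicographically greater than `T` (w.r.t. a linear order on `Ω`):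
the minimal element of the symmetric difference belongs to `T \ S`. -/
def LexGT {Ω : Type*} [LinearOrder Ω] (S T : Set Ω) : Prop :=
  ∃ ω, ω ∈ T ∧ ω ∉ S ∧
    ∀ ω', ((ω' ∈ S ∧ ω' ∉ T) ∨ (ω' ∈ T ∧ ω' ∉ S)) → ω ≤ ω'

/-- **Lexicographical theorem.** Let `𝒜, ℬ` be dual multi-hypergraphs
on a finite linearly ordered ground set `Ω`, and let `A^L ∈ 𝒜` be lexicographically
maximal. Then `A^L` is a minimal edge of `𝒜`, and for every `ω* ∈ A^L` there is an
edge `B ∈ ℬ` with `A^L ∩ B = {ω*}` and `ω* ≻ ω` for every `ω ∈ B \ {ω*}`. -/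
theorem lexicographical_theorem
    {Ω : Type*} [Fintype Ω] [LinearOrder Ω]
    (𝒜 ℬ : Set (Set Ω)) (hdual : DualHypergraphs 𝒜 ℬ)
    (AL : Set Ω) (hAL : AL ∈ 𝒜)
    (hlexmax : ∀ A ∈ 𝒜, ¬ LexGT A AL) :
    (∀ A ∈ 𝒜, ¬ A ⊂ AL) ∧
    ∀ ωstar ∈ AL, ∃ B ∈ ℬ, AL ∩ B = {ωstar} ∧
      ∀ ω ∈ B, ω ≠ ωstar → ω < ωstar := by
  obtain ⟨hmeet, hAdual, hBdual⟩ := hdual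
  constructor
  · intro A hA' hss
    apply hlexmax A hA'
    have hne' : (AL \ A).Nonempty := Set.nonempty_of_ssubset hss
    obtain ⟨ω, hω, hmin⟩ := Set.exists_min_image (AL \ A) id (Set.toFinite _) hne'
    refine ⟨ω, hω.1, hω.2, fun ω' hd => ?_⟩
    rcases hd with ⟨h1, h2⟩ | ⟨h1, h2⟩
    · exact absurd (hss.subset h1) h2
    · exact hmin ω' ⟨h1, h2⟩
  · intro ωstar hωstar
    set T : Set Ω := {ωstar} ∪ {ω | ω ∉ AL ∧ ω < ωstar} with hT
    have hTmeets : ∀ A ∈ 𝒜, (T ∩ A).Nonempty := by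
      intro A hAmem
      by_contra hemp
      rw [Set.not_nonempty_iff_eq_empty] at hemp
      apply hlexmax A hAmem
      have hωA : ωstar ∉ A := fun h =>
        (Set.eq_empty_iff_forall_notMem.mp hemp ωstar) ⟨Or.inl rfl, h⟩
      have hsd : ((A \ AL) ∪ (AL \ A)).Nonempty := ⟨ωstar, Or.inr ⟨hωstar, hωA⟩⟩
      obtain ⟨ω, hω, hmin⟩ := Set.exists_min_image _ id (Set.toFinite _) hsd
      have hωle : ω ≤ ωstar := hmin ωstar (Or.inr ⟨hωstar, hωA⟩)
      rcases hω with h | h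
      · exfalso
        have hlt : ω < ωstar := lt_of_le_of_ne hωle (fun h' => hωA (h' ▸ h.1))
        exact (Set.eq_empty_iff_forall_notMem.mp hemp ω) ⟨Or.inr ⟨h.2, hlt⟩, h.1⟩
      · refine ⟨ω, h.1, h.2, fun ω' hd => hmin ω' ?_⟩
        rcases hd with ⟨h1, h2⟩ | ⟨h1, h2⟩
        · exact Or.inl ⟨h1, h2⟩
        · exact Or.inr ⟨h1, h2⟩
    obtain ⟨B, hBmem, hBsub⟩ := hBdual T hTmeets
    refine ⟨B, hBmem, ?_, ?_⟩
    · apply Set.eq_singleton_iff_nonempty_unique_mem.mpr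
      refine ⟨hmeet AL hAL B hBmem, fun x hx => ?_⟩
      rcases hBsub hx.2 with h | h
      · exact h
      · exact absurd hx.1 h.1
    · intro ω hω hne
      rcases hBsub hω with h | h
      · exact absurd h hne
      · exact h.2
end

section
/- Let g : X × Y → Ω be a tight finite two-person game form and let ≻_A, ≻_B be linear orders (preferences) on Ω. Let x^L ∈ X be a lexsafe strategy of Alice, i.e., one whose support g(x^L) is lexicographically maximal, with respect to the lexicographic order induced by ≻_A, among all supports {g(x) : x ∈ X}. Then x^L is a minimal strategy, and there exists a minimal strategy y^M ∈ Y of Bob such that: (x^L, y^M) is a Nash equilibrium of the game (g; ≻_A, ≻_B); the situation is simple, i.e., g(x^L) ∩ g(y^M) = {g(x^L, y^M)}; and g(x^L, y^M) ⪰_A ω for every ω ∈ g(y^M). The symmetric statement with the roles of Alice and Bob exchanged also holds. -/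
/-- `S` is lexicographically greater than `T` with respect to the (non-strict)
linear order `le` on `Ω`: the `le`-minimal element of the symmetric difference
belongs to `T \ S`. -/
def LexGTRel {Ω : Type*} (le : Ω → Ω → Prop) (S T : Set Ω) : Prop :=
  ∃ ω, ω ∈ T ∧ ω ∉ S ∧
    ∀ ω', ((ω' ∈ S ∧ ω' ∉ T) ∨ (ω' ∈ T ∧ ω' ∉ S)) → le ω ω'

/-- Nash equilibrium of the game `(g; ⪰_A, ⪰_B)` given by preference orders
`prefA`, `prefB` (both understood as `⪯`, i.e. `prefA a b` means `b ⪰_A a`). -/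
def IsNashEqPref {X Y Ω : Type*} (g : X × Y → Ω)
    (prefA prefB : Ω → Ω → Prop) (x : X) (y : Y) : Prop :=
  (∀ x' : X, prefA (g (x', y)) (g (x, y))) ∧ (∀ y' : Y, prefB (g (x, y')) (g (x, y)))

/-- A maximal element of a nonempty finset w.r.t. a total transitive relation. -/
lemma exists_rmax {Ω : Type*} (r : Ω → Ω → Prop)
    (htr : ∀ a b c, r a b → r b c → r a c) (hto : ∀ a b, r a b ∨ r b a) :
    ∀ (s : Finset Ω), s.Nonempty → ∃ m ∈ s, ∀ a ∈ s, r a m := by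
  intro s
  induction s using Finset.cons_induction with
  | empty => simp
  | cons a s ha ih =>
    intro _
    rcases s.eq_empty_or_nonempty with rfl | hs
    · refine ⟨a, by simp, ?_⟩
      intro b hb
      rcases Finset.mem_cons.1 hb with rfl | hb
      swap
      · exact absurd hb (Finset.notMem_empty b)
      exact (hto _ _).elim id id
    · obtain ⟨m, hm, hmax⟩ := ih hs
      rcases hto a m with h1 | h1
      · refine ⟨m, Finset.mem_cons_of_mem hm, ?_⟩
        intro b hb
        rcases Finset.mem_cons.1 hb with rfl | hb
        · exact h1
        · exact hmax b hb
      · refine ⟨a, Finset.mem_cons_self a s, ?_⟩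
        intro b hb
        rcases Finset.mem_cons.1 hb with rfl | hb
        · exact (hto _ _).elim id id
        · exact htr _ m _ (hmax b hb) h1

lemma exists_rmax_set {Ω : Type*} [Fintype Ω] (r : Ω → Ω → Prop)
    (htr : ∀ a b c, r a b → r b c → r a c) (hto : ∀ a b, r a b ∨ r b a)
    (S : Set Ω) (hS : S.Nonempty) : ∃ m ∈ S, ∀ a ∈ S, r a m := by
  classical
  obtain ⟨m, hm, hmax⟩ := exists_rmax r htr hto (Set.toFinite S).toFinset
    (by rwa [Set.Finite.toFinset_nonempty])
  exact ⟨m, (Set.Finite.mem_toFinset _).1 hm,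
    fun a ha => hmax a ((Set.Finite.mem_toFinset _).2 ha)⟩

/-- Main one-sided lemma. -/
lemma main_half {X Y Ω : Type*} [Fintype X] [Fintype Y] [Fintype Ω]
    [Nonempty X] [Nonempty Y]
    (g : X × Y → Ω) (ht : TightGF g)
    (prefA prefB : Ω → Ω → Prop)
    (hA : IsLinearOrder Ω prefA) (hB : IsLinearOrder Ω prefB)
    (xL : X) (hlex : ∀ x : X, ¬ LexGTRel prefA (suppA g x) (suppA g xL)) :
    (∀ x : X, ¬ suppA g x ⊂ suppA g xL) ∧
      ∃ yM : Y, (∀ y : Y, ¬ suppB g y ⊂ suppB g yM) ∧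
        IsNashEqPref g prefA prefB xL yM ∧
        suppA g xL ∩ suppB g yM = {g (xL, yM)} ∧
        ∀ ω ∈ suppB g yM, prefA ω (g (xL, yM)) := by
  classical
  haveI := hA
  haveI := hB
  have hArefl : ∀ a, prefA a a := fun a => refl_of prefA a
  have hAtr : ∀ a b c, prefA a b → prefA b c → prefA a c := fun a b c => trans_of prefA
  have hAtot : ∀ a b, prefA a b ∨ prefA b a := fun a b => total_of prefA a b
  have hBtr : ∀ a b c, prefB a b → prefB b c → prefB a c := fun a b c => trans_of prefB
  have hBtot : ∀ a b, prefB a b ∨ prefB b a := fun a b => total_of prefB a b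
  -- the flipped relation is also transitive and total
  have hAtr' : ∀ a b c : Ω, prefA b a → prefA c b → prefA c a := fun a b c h1 h2 => hAtr c b a h2 h1
  -- minimality of xL
  have hmin : ∀ x : X, ¬ suppA g x ⊂ suppA g xL := by
    intro x hx
    apply hlex x
    have hD : (suppA g xL \ suppA g x).Nonempty := by
      obtain ⟨ω, hω1, hω2⟩ := Set.exists_of_ssubset hx
      exact ⟨ω, hω1, hω2⟩
    obtain ⟨ω, hωD, hωmin⟩ := exists_rmax_set (fun a b => prefA b a) hAtr'
      (fun a b => (hAtot b a)) _ hD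
    refine ⟨ω, hωD.1, hωD.2, ?_⟩
    intro ω' hω'
    rcases hω' with ⟨h1, h2⟩ | ⟨h1, h2⟩
    · exact absurd (hx.1 h1) h2
    · exact hωmin ω' ⟨h1, h2⟩
  refine ⟨hmin, ?_⟩
  -- ω0 : prefB-max of suppA g xL
  have hSne : (suppA g xL).Nonempty :=
    ⟨g (xL, Classical.arbitrary Y), Classical.arbitrary Y, rfl⟩
  obtain ⟨ω0, hω0S, hω0max⟩ := exists_rmax_set prefB hBtr hBtot _ hSne
  set B : Set Ω := {ω | ¬ prefA ω ω0} ∪ (suppA g xL \ {ω0}) with hBdef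
  have hω0notB : ω0 ∉ B := by
    intro h
    rcases h with h | h
    · exact h (hArefl ω0)
    · exact h.2 rfl
  -- key claim: Bob has a strategy avoiding B
  have key : ∃ y, ∀ x, g (x, y) ∉ B := by
    by_contra hcon
    push_neg at hcon
    choose ψ hψ using hcon
    have hforx : ∀ x, ∃ y, g (x, y) ∉ B := by
      intro x
      by_contra hx
      push_neg at hx
      apply hlex x
      -- supp x ⊆ B
      have hsub : suppA g x ⊆ B := by
        rintro ω ⟨y, rfl⟩
        exact hx y
      have hω0nx : ω0 ∉ suppA g x := fun h => hω0notB (hsub h)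
      set Δ : Set Ω := (suppA g x \ suppA g xL) ∪ (suppA g xL \ suppA g x) with hΔdef
      have hΔne : Δ.Nonempty := ⟨ω0, Or.inr ⟨hω0S, hω0nx⟩⟩
      obtain ⟨ω, hωΔ, hωmin⟩ := exists_rmax_set (fun a b => prefA b a) hAtr'
        (fun a b => (hAtot b a)) _ hΔne
      have hωmin' : ∀ ω' ∈ Δ, prefA ω ω' := hωmin
      have hωin : ω ∈ suppA g xL \ suppA g x := by
        rcases hωΔ with ⟨h1, h2⟩ | h
        · exfalso
          have hωB : ω ∈ B := hsub h1
          rcases hωB with hb | hb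
          · exact hb (hωmin' ω0 (Or.inr ⟨hω0S, hω0nx⟩))
          · exact h2 hb.1
        · exact h
      exact ⟨ω, hωin.1, hωin.2, fun ω' h => hωmin' ω' (h.elim Or.inl Or.inr)⟩
    choose φ hφ using hforx
    obtain ⟨x, y, hxy⟩ := ht φ ψ
    exact hφ x (hxy ▸ hψ y)
  -- pick yM with minimal support cardinality among those avoiding B
  obtain ⟨y1, hy1⟩ := key
  set P : Y → Prop := fun y => ∀ x, g (x, y) ∉ B with hPdef
  have hFne : (Finset.univ.filter P).Nonempty := ⟨y1, Finset.mem_filter.2 ⟨Finset.mem_univ y1, hy1⟩⟩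
  obtain ⟨yM, hyMF, hyMmin⟩ := Finset.exists_min_image (Finset.univ.filter P)
    (fun y => (suppB g y).ncard) hFne
  have hyM : ∀ x, g (x, yM) ∉ B := by
    have := Finset.mem_filter.1 hyMF
    exact this.2
  -- consequences of avoiding B
  have havoid : ∀ ω ∈ suppB g yM, prefA ω ω0 ∧ (ω ∈ suppA g xL → ω = ω0) := by
    rintro ω ⟨x, rfl⟩
    have h := hyM x
    constructor
    · by_contra hc
      exact h (Or.inl hc)
    · intro hS
      by_contra hne
      exact h (Or.inr ⟨hS, hne⟩)
  have hout : g (xL, yM) = ω0 :=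
    (havoid _ ⟨xL, rfl⟩).2 ⟨yM, rfl⟩
  refine ⟨yM, ?_, ⟨?_, ?_⟩, ?_, ?_⟩
  · -- minimality of yM
    intro y hy
    have hPy : P y := by
      intro x hxB
      have hmem : g (x, y) ∈ suppB g yM := hy.1 ⟨x, rfl⟩
      obtain ⟨x', hx'⟩ := hmem
      exact hyM x' (hx' ▸ hxB)
    have hlt : (suppB g y).ncard < (suppB g yM).ncard :=
      Set.ncard_lt_ncard hy (Set.toFinite _)
    have := hyMmin y (Finset.mem_filter.2 ⟨Finset.mem_univ y, hPy⟩)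
    omega
  · -- Alice's NE condition
    intro x'
    rw [hout]
    exact (havoid _ ⟨x', rfl⟩).1
  · -- Bob's NE condition
    intro y'
    rw [hout]
    exact hω0max _ ⟨y', rfl⟩
  · -- simplicity
    rw [hout]
    ext ω
    constructor
    · rintro ⟨hS, hT⟩
      exact (havoid ω hT).2 hS
    · rintro rfl
      exact ⟨hω0S, hout ▸ ⟨xL, rfl⟩⟩
  · intro ω hω
    rw [hout]
    exact (havoid ω hω).1

/-- In a tight finite two-person game form with preferences
`⪯_A, ⪯_B`: every lexsafe strategy `x^L` of Alice is minimal, and there is a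
minimal strategy `y^M` of Bob such that `(x^L, y^M)` is a simple Nash equilibrium
whose outcome is `⪰_A`-best in `g(y^M)`; and symmetrically with the players
exchanged. -/
theorem lexsafe_nash_equilibrium
    {X Y Ω : Type*} [Fintype X] [Fintype Y] [Fintype Ω]
    [Nonempty X] [Nonempty Y]
    (g : X × Y → Ω) (hsurj : Function.Surjective g)
    (ht : TightGF g)
    (prefA prefB : Ω → Ω → Prop)
    (hA : IsLinearOrder Ω prefA) (hB : IsLinearOrder Ω prefB) :
    (∀ xL : X, (∀ x : X, ¬ LexGTRel prefA (suppA g x) (suppA g xL)) →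
      (∀ x : X, ¬ suppA g x ⊂ suppA g xL) ∧
      ∃ yM : Y, (∀ y : Y, ¬ suppB g y ⊂ suppB g yM) ∧
        IsNashEqPref g prefA prefB xL yM ∧
        suppA g xL ∩ suppB g yM = {g (xL, yM)} ∧
        ∀ ω ∈ suppB g yM, prefA ω (g (xL, yM))) ∧
    (∀ yL : Y, (∀ y : Y, ¬ LexGTRel prefB (suppB g y) (suppB g yL)) →
      (∀ y : Y, ¬ suppB g y ⊂ suppB g yL) ∧
      ∃ xM : X, (∀ x : X, ¬ suppA g x ⊂ suppA g xM) ∧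
        IsNashEqPref g prefA prefB xM yL ∧
        suppA g xM ∩ suppB g yL = {g (xM, yL)} ∧
        ∀ ω ∈ suppA g xM, prefB ω (g (xM, yL))) := by
  constructor
  · intro xL hlex
    exact main_half g ht prefA prefB hA hB xL hlex
  · intro yL hlex
    set g' : Y × X → Ω := fun p => g (p.2, p.1) with hg'
    have ht' : TightGF g' := by
      intro φ ψ
      obtain ⟨x, y, h⟩ := ht ψ φ
      exact ⟨y, x, h.symm⟩
    obtain ⟨hmin, xM, hxmin, ⟨hNE1, hNE2⟩, hsimp, hbest⟩ :=
      main_half g' ht' prefB prefA hB hA yL hlex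
    refine ⟨hmin, xM, hxmin, ⟨hNE2, hNE1⟩, ?_, hbest⟩
    rw [Set.inter_comm]
    exact hsimp
end

section
/- Let g : X × Y → Ω be a tight finite two-person game form with linear preference orders ≻_A, ≻_B on Ω. Then any two lexsafe strategies of Alice have the same support. Moreover, if x^L is a lexsafe strategy of Alice and y^M ∈ Y is a strategy such that (x^L, y^M) is a Nash equilibrium with g(x^L) ∩ g(y^M) = {ω*} where ω* = g(x^L, y^M), then for every lexsafe strategy x of Alice, (x, y^M) is also a Nash equilibrium with g(x, y^M) = ω*. -/
/-- A lexsafe strategy of Alice: its support is lexicographically maximal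
(w.r.t. `prefA`) among all supports of Alice's strategies. -/
def LexsafeA {X Y Ω : Type*} (g : X × Y → Ω) (prefA : Ω → Ω → Prop) (xL : X) : Prop :=
  ∀ x : X, ¬ LexGTRel prefA (suppA g x) (suppA g xL)

private lemma exists_pref_min {Ω : Type*} (pref : Ω → Ω → Prop) (h : IsLinearOrder Ω pref) :
    ∀ s : Finset Ω, s.Nonempty → ∃ a ∈ s, ∀ b ∈ s, pref a b := by
  haveI := h
  haveI := Classical.decEq Ω
  intro s
  induction s using Finset.induction_on with
  | empty => intro hs; exact absurd hs (by simp)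
  | @insert a s ha ih =>
    intro _
    by_cases hs : s.Nonempty
    · obtain ⟨m, hm, hmin⟩ := ih hs
      rcases total_of pref a m with hcase | hcase
      · refine ⟨a, Finset.mem_insert_self a s, ?_⟩
        intro b hb
        rcases Finset.mem_insert.mp hb with rfl | hb
        · exact refl_of pref b
        · exact trans_of pref hcase (hmin b hb)
      · refine ⟨m, Finset.mem_insert_of_mem hm, ?_⟩
        intro b hb
        rcases Finset.mem_insert.mp hb with rfl | hb
        · exact hcase
        · exact hmin b hb
    · refine ⟨a, Finset.mem_insert_self a s, ?_⟩
      intro b hb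
      rcases Finset.mem_insert.mp hb with rfl | hb
      · exact refl_of pref b
      · exact absurd ⟨b, hb⟩ hs

/-- In a tight finite two-person game form, all lexsafe strategies
of Alice have the same support; and if `(x^L, y^M)` is a Nash equilibrium with
`g(x^L) ∩ g(y^M) = {ω*}`, `ω* = g(x^L, y^M)`, and `x^L` lexsafe, then for every
lexsafe strategy `x` of Alice, `(x, y^M)` is also a Nash equilibrium with outcome `ω*`. -/
theorem lexsafe_same_support_and_ne_transfer
    {X Y Ω : Type*} [Fintype X] [Fintype Y] [Fintype Ω]
    [Nonempty X] [Nonempty Y]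
    (g : X × Y → Ω) (hsurj : Function.Surjective g)
    (ht : TightGF g)
    (prefA prefB : Ω → Ω → Prop)
    (hA : IsLinearOrder Ω prefA) (hB : IsLinearOrder Ω prefB) :
    (∀ x x' : X, LexsafeA g prefA x → LexsafeA g prefA x' →
      suppA g x = suppA g x') ∧
    (∀ (xL : X) (yM : Y), LexsafeA g prefA xL →
      IsNashEqPref g prefA prefB xL yM →
      suppA g xL ∩ suppB g yM = {g (xL, yM)} →
      ∀ x : X, LexsafeA g prefA x →
        g (x, yM) = g (xL, yM) ∧ IsNashEqPref g prefA prefB x yM) := by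

  classical
  have part1 : ∀ x x' : X, LexsafeA g prefA x → LexsafeA g prefA x' →
      suppA g x = suppA g x' := by
    intro x x' hx hx'
    by_contra hne
    have hD : {ω | (ω ∈ suppA g x ∧ ω ∉ suppA g x') ∨
        (ω ∈ suppA g x' ∧ ω ∉ suppA g x)}.Nonempty := by
      by_contra hemp
      apply hne
      ext ω
      constructor
      · intro h
        by_contra h2
        exact hemp ⟨ω, Or.inl ⟨h, h2⟩⟩
      · intro h
        by_contra h2
        exact hemp ⟨ω, Or.inr ⟨h, h2⟩⟩
    have hfin : {ω | (ω ∈ suppA g x ∧ ω ∉ suppA g x') ∨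
        (ω ∈ suppA g x' ∧ ω ∉ suppA g x)}.Finite := Set.toFinite _
    obtain ⟨ω, hωmem, hωmin⟩ := exists_pref_min prefA hA hfin.toFinset
      (by rwa [Set.Finite.toFinset_nonempty])
    rw [Set.Finite.mem_toFinset] at hωmem
    have hmin' : ∀ ω', ((ω' ∈ suppA g x ∧ ω' ∉ suppA g x') ∨
        (ω' ∈ suppA g x' ∧ ω' ∉ suppA g x)) → prefA ω ω' := by
      intro ω' h'
      exact hωmin ω' ((Set.Finite.mem_toFinset hfin).mpr h')
    rcases hωmem with ⟨h1, h2⟩ | ⟨h1, h2⟩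
    · exact hx x' ⟨ω, h1, h2, fun ω' h' => hmin' ω' (Or.symm h')⟩
    · exact hx' x ⟨ω, h1, h2, fun ω' h' => hmin' ω' h'⟩
  refine ⟨part1, ?_⟩
  intro xL yM hL hNE hsingle x hx
  have hsupp : suppA g x = suppA g xL := part1 x xL hx hL
  have hmem : g (x, yM) ∈ suppA g xL ∩ suppB g yM := by
    constructor
    · rw [← hsupp]; exact ⟨yM, rfl⟩
    · exact ⟨x, rfl⟩
  rw [hsingle, Set.mem_singleton_iff] at hmem
  refine ⟨hmem, ?_, ?_⟩
  · intro x'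
    rw [hmem]
    exact hNE.1 x'
  · intro y'
    have : g (x, y') ∈ suppA g xL := by rw [← hsupp]; exact ⟨y', rfl⟩
    obtain ⟨y'', hy''⟩ := this
    rw [hmem, ← hy'']
    exact hNE.2 y''
end

section
/- A finite two-person game form g : X × Y → Ω is tight if and only if the multi-hypergraphs 𝒜(g) = {g(x) : x ∈ X} and ℬ(g) = {g(y) : y ∈ Y} of strategy supports are dual; equivalently, g is tight if and only if for every partition Ω = Ω_A ∪ Ω_B exactly one of the following holds: there exists x ∈ X with g(x) ⊆ Ω_A, or there exists y ∈ Y with g(y) ⊆ Ω_B. -/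
/-- A finite two-person game form `g` is tight iff the
multi-hypergraphs `𝒜(g) = {g(x)}` and `ℬ(g) = {g(y)}` of strategy supports are
dual; equivalently, iff for every partition `Ω = Ω_A ∪ Ω_B` exactly one of the
following holds: some `g(x) ⊆ Ω_A`, or some `g(y) ⊆ Ω_B`. -/
theorem tight_iff_dual_supports_iff_partition
    {X Y Ω : Type*} [Fintype X] [Fintype Y] [Fintype Ω]
    [Nonempty X] [Nonempty Y]
    (g : X × Y → Ω) (hsurj : Function.Surjective g) :
    (TightGF g ↔ DualHypergraphs (Set.range (suppA g)) (Set.range (suppB g))) ∧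
    (TightGF g ↔ ∀ ΩA : Set Ω,
      Xor' (∃ x : X, suppA g x ⊆ ΩA) (∃ y : Y, suppB g y ⊆ ΩAᶜ)) := by
  classical
  have h1 : TightGF g → DualHypergraphs (Set.range (suppA g)) (Set.range (suppB g)) := by
    intro ht
    refine ⟨?_, ?_, ?_⟩
    · rintro A ⟨x, rfl⟩ B ⟨y, rfl⟩
      exact ⟨g (x, y), ⟨y, rfl⟩, ⟨x, rfl⟩⟩
    · intro T hT
      by_contra hc
      push_neg at hc
      have hφ : ∀ x, ∃ y, g (x, y) ∉ T := by
        intro x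
        have := hc (suppA g x) ⟨x, rfl⟩
        rw [Set.not_subset] at this
        obtain ⟨ω, ⟨y, rfl⟩, hω⟩ := this
        exact ⟨y, hω⟩
      have hψ : ∀ y, ∃ x, g (x, y) ∈ T := by
        intro y
        obtain ⟨ω, hωT, x, rfl⟩ := hT (suppB g y) ⟨y, rfl⟩
        exact ⟨x, hωT⟩
      choose φ hφ using hφ
      choose ψ hψ using hψ
      obtain ⟨x, y, hxy⟩ := ht φ ψ
      exact hφ x (hxy ▸ hψ y)
    · intro T hT
      by_contra hc
      push_neg at hc
      have hψ : ∀ y, ∃ x, g (x, y) ∉ T := by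
        intro y
        have := hc (suppB g y) ⟨y, rfl⟩
        rw [Set.not_subset] at this
        obtain ⟨ω, ⟨x, rfl⟩, hω⟩ := this
        exact ⟨x, hω⟩
      have hφ : ∀ x, ∃ y, g (x, y) ∈ T := by
        intro x
        obtain ⟨ω, hωT, y, rfl⟩ := hT (suppA g x) ⟨x, rfl⟩
        exact ⟨y, hωT⟩
      choose φ hφ using hφ
      choose ψ hψ using hψ
      obtain ⟨x, y, hxy⟩ := ht φ ψ
      exact hψ y (hxy ▸ hφ x)
  have h2 : DualHypergraphs (Set.range (suppA g)) (Set.range (suppB g)) → TightGF g := by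
    rintro ⟨_, hd, _⟩ φ ψ
    have hmeets : ∀ B ∈ Set.range (suppB g),
        ((Set.range fun y => g (ψ y, y)) ∩ B).Nonempty := by
      rintro B ⟨y, rfl⟩
      exact ⟨g (ψ y, y), ⟨y, rfl⟩, ⟨ψ y, rfl⟩⟩
    obtain ⟨A, ⟨x, rfl⟩, hsub⟩ := hd _ hmeets
    obtain ⟨y, hy⟩ := hsub ⟨φ x, rfl⟩
    exact ⟨x, y, hy.symm⟩
  have h3 : TightGF g → ∀ ΩA : Set Ω,
      Xor' (∃ x, suppA g x ⊆ ΩA) (∃ y, suppB g y ⊆ ΩAᶜ) := by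
    intro ht ΩA
    have hnot2 : ¬ ((∃ x, suppA g x ⊆ ΩA) ∧ (∃ y, suppB g y ⊆ ΩAᶜ)) := by
      rintro ⟨⟨x, hx⟩, ⟨y, hy⟩⟩
      exact hy ⟨x, rfl⟩ (hx ⟨y, rfl⟩)
    have hone : (∃ x, suppA g x ⊆ ΩA) ∨ (∃ y, suppB g y ⊆ ΩAᶜ) := by
      by_contra hc
      push_neg at hc
      obtain ⟨hA, hB⟩ := hc
      have hφ : ∀ x, ∃ y, g (x, y) ∉ ΩA := by
        intro x
        have := hA x
        rw [Set.not_subset] at this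
        obtain ⟨ω, ⟨y, rfl⟩, hω⟩ := this
        exact ⟨y, hω⟩
      have hψ : ∀ y, ∃ x, g (x, y) ∈ ΩA := by
        intro y
        have := hB y
        rw [Set.not_subset] at this
        obtain ⟨ω, ⟨x, rfl⟩, hω⟩ := this
        exact ⟨x, not_not.mp hω⟩
      choose φ hφ using hφ
      choose ψ hψ using hψ
      obtain ⟨x, y, hxy⟩ := ht φ ψ
      exact hφ x (hxy ▸ hψ y)
    rcases hone with h | h
    · exact Or.inl ⟨h, fun h' => hnot2 ⟨h, h'⟩⟩
    · exact Or.inr ⟨h, fun h' => hnot2 ⟨h', h⟩⟩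
  have h4 : (∀ ΩA : Set Ω, Xor' (∃ x, suppA g x ⊆ ΩA) (∃ y, suppB g y ⊆ ΩAᶜ)) →
      TightGF g := by
    intro hp φ ψ
    rcases hp (Set.range fun y => g (ψ y, y)) with ⟨⟨x, hx⟩, _⟩ | ⟨⟨y, hy⟩, _⟩
    · obtain ⟨y, hy⟩ := hx ⟨φ x, rfl⟩
      exact ⟨x, y, hy.symm⟩
    · exact absurd ⟨y, rfl⟩ (hy ⟨ψ y, rfl⟩)
  exact ⟨⟨h1, h2⟩, ⟨h3, h4⟩⟩
end

section
/- A finite two-person game form g : X × Y → Ω is tight if and only if for every map φ : X → Y there exists a strategy y ∈ Y such that g(y) ⊆ {g(x, φ(x)) : x ∈ X}; equivalently, if and only if for every map ψ : Y → X there exists a strategy x ∈ X such that g(x) ⊆ {g(ψ(y), y) : y ∈ Y}. -/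
/-- A finite two-person game form `g` is tight iff for every
response strategy `φ : X → Y` some column support `g(y)` is contained in
`{g(x, φ(x)) : x ∈ X}`; equivalently, iff for every response strategy
`ψ : Y → X` some row support `g(x)` is contained in `{g(ψ(y), y) : y ∈ Y}`. -/
theorem tight_iff_response_covers
    {X Y Ω : Type*} [Fintype X] [Fintype Y] [Fintype Ω]
    [Nonempty X] [Nonempty Y]
    (g : X × Y → Ω) (hsurj : Function.Surjective g) :
    (TightGF g ↔ ∀ φ : X → Y, ∃ y : Y, suppB g y ⊆ {ω | ∃ x, g (x, φ x) = ω}) ∧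
    (TightGF g ↔ ∀ ψ : Y → X, ∃ x : X, suppA g x ⊆ {ω | ∃ y, g (ψ y, y) = ω}) := by
  constructor
  · constructor
    · intro ht φ
      by_contra h
      push_neg at h
      have h' : ∀ y, ∃ x, ¬ ∃ x', g (x', φ x') = g (x, y) := by
        intro y
        obtain ⟨ω, ⟨x, hx⟩, hω⟩ := Set.not_subset.mp (h y)
        exact ⟨x, by rwa [hx]⟩
      choose ψ hψ using h'
      obtain ⟨x, y, hxy⟩ := ht φ ψ
      exact hψ y ⟨x, hxy⟩
    · intro h φ ψ
      obtain ⟨y, hy⟩ := h φ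
      obtain ⟨x, hx⟩ := hy ⟨ψ y, rfl⟩
      exact ⟨x, y, hx⟩
  · constructor
    · intro ht ψ
      by_contra h
      push_neg at h
      have h' : ∀ x, ∃ y, ¬ ∃ y', g (ψ y', y') = g (x, y) := by
        intro x
        obtain ⟨ω, ⟨y, hy⟩, hω⟩ := Set.not_subset.mp (h x)
        exact ⟨y, by rwa [hy]⟩
      choose φ hφ using h'
      obtain ⟨x, y, hxy⟩ := ht φ ψ
      exact hφ x ⟨y, hxy.symm⟩
    · intro h φ ψ
      obtain ⟨x, hx⟩ := h ψ
      obtain ⟨y, hy⟩ := hx ⟨φ x, rfl⟩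
      exact ⟨x, y, hy.symm⟩
end

section
/- Let g : X × Y → Ω be a finite two-person game form and let g' : X × Y → Ω be any selection from the game correspondence of g, i.e., g'(x,y) ∈ g(x) ∩ g(y) for every situation (x,y), where g(x) and g(y) denote the supports of x and y in g. If g is tight, then g' is tight. -/
/-- If `g'` is a selection from the game correspondence
`G(x,y) = g(x) ∩ g(y)` of a tight game form `g`, then `g'` is tight. -/
theorem selection_of_tight_is_tight
    {X Y Ω : Type*} [Fintype X] [Fintype Y] [Fintype Ω]
    [Nonempty X] [Nonempty Y]
    (g : X × Y → Ω) (hsurj : Function.Surjective g)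
    (g' : X × Y → Ω)
    (hsel : ∀ x y, g' (x, y) ∈ suppA g x ∩ suppB g y)
    (ht : TightGF g) :
    TightGF g' := by
  intro φ ψ
  choose φt hφt using fun x => (hsel x (φ x)).1
  choose ψt hψt using fun y => (hsel (ψ y) y).2
  obtain ⟨x, y, hxy⟩ := ht φt ψt
  exact ⟨x, y, by rw [← hφt x, ← hψt y, hxy]⟩
end

section
/- Let A and B be finite nonempty linearly ordered sets and let x : A → B and y : B → A be monotone nondecreasing maps. Then there exists a deal, i.e., a pair (a, b) ∈ A × B with x(a) = b and y(b) = a; equivalently, the composition y ∘ x : A → A has a fixed point. Moreover, there are no longer cycles: every periodic point of y ∘ x is a fixed point of y ∘ x (and then b = x(a) satisfies y(b) = a). -/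
private lemma iterate_fix {A : Type*} [LinearOrder A] {f : A → A} (hf : Monotone f)
    (a : A) (n : ℕ) (hn : 0 < n) (h : f^[n] a = a) : f a = a := by
  rcases lt_trichotomy (f a) a with hlt | heq | hgt
  · -- f^[k+1] a ≤ f a for all k
    have key : ∀ k, f^[k+1] a ≤ f a := by
      intro k
      induction k with
      | zero => simp
      | succ k ih =>
        rw [Function.iterate_succ_apply']
        exact (hf ih).trans (hf hlt.le)
    obtain ⟨m, rfl⟩ := Nat.exists_eq_succ_of_ne_zero hn.ne'
    have := key m
    rw [h] at this
    exact absurd (this.trans_lt hlt) (lt_irrefl a)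
  · exact heq
  · have key : ∀ k, f a ≤ f^[k+1] a := by
      intro k
      induction k with
      | zero => simp
      | succ k ih =>
        rw [Function.iterate_succ_apply']
        exact (hf hgt.le).trans (hf ih)
    obtain ⟨m, rfl⟩ := Nat.exists_eq_succ_of_ne_zero hn.ne'
    have := key m
    rw [h] at this
    exact absurd (hgt.trans_le this) (lt_irrefl a)

/-- For monotone nondecreasing maps `x : A → B` and `y : B → A`
between finite nonempty linearly ordered sets there exists a deal: a pair `(a, b)`
with `x a = b` and `y b = a` (equivalently, `y ∘ x` has a fixed point). Moreover
there are no longer cycles: every periodic point of `y ∘ x` is a fixed point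
(and then `b = x a` satisfies `y b = a`). -/
theorem monotone_bargaining_deal_exists
    {A B : Type*} [Fintype A] [Fintype B] [Nonempty A] [Nonempty B]
    [LinearOrder A] [LinearOrder B]
    (x : A → B) (y : B → A) (hx : Monotone x) (hy : Monotone y) :
    (∃ a b, x a = b ∧ y b = a) ∧
    (∀ (a : A) (n : ℕ), 0 < n → (y ∘ x)^[n] a = a → y (x a) = a) := by
  have hf : Monotone (y ∘ x) := hy.comp hx
  constructor
  · set S : Finset A := Finset.univ.filter (fun a => y (x a) ≤ a) with hS
    have hSne : S.Nonempty := by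
      refine ⟨Finset.univ.max' Finset.univ_nonempty, ?_⟩
      simp [hS, Finset.le_max' _ _ (Finset.mem_univ _)]
    set m := S.min' hSne with hm
    have hmS : m ∈ S := S.min'_mem hSne
    have h1 : y (x m) ≤ m := by simpa [hS] using hmS
    have h2 : y (x (y (x m))) ≤ y (x m) := hf h1
    have hmem : y (x m) ∈ S := by simp [hS, h2]
    have h3 : m ≤ y (x m) := S.min'_le _ hmem
    exact ⟨m, x m, rfl, le_antisymm h1 h3⟩
  · intro a n hn h
    exact iterate_fix hf a n hn h
end

section
/- Let A and B be finite nonempty linearly ordered sets and let A × B = Ω_A ∪ Ω_B be a partition. Then exactly one of the following holds: (a) there exists a monotone nondecreasing map x : A → B such that (a, x(a)) ∈ Ω_A for every a ∈ A; (b) there exists a monotone nondecreasing map y : B → A such that (y(b), b) ∈ Ω_B for every b ∈ B. Consequently every zero-sum ±1 monotone bargaining game is solvable and the monotone bargaining game form is tight. -/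
/-- A monotone self-map of a finite nonempty linear order has a fixed point. -/
lemma monotone_bargaining_fixed_point {A : Type*} [Fintype A] [Nonempty A]
    [LinearOrder A] (f : A → A) (hf : Monotone f) : ∃ a, f a = a := by
  classical
  set s : Finset A := Finset.univ.filter (fun a => a ≤ f a) with hs
  have h0 : (Finset.univ : Finset A).min' Finset.univ_nonempty ∈ s := by
    simp only [hs, Finset.mem_filter, Finset.mem_univ, true_and]
    exact Finset.min'_le _ _ (Finset.mem_univ _)
  have hsne : s.Nonempty := ⟨_, h0⟩
  have h1 : s.max' hsne ≤ f (s.max' hsne) := by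
    have := s.max'_mem hsne
    simpa [hs] using this
  have h2 : f (s.max' hsne) ∈ s := by
    simp only [hs, Finset.mem_filter, Finset.mem_univ, true_and]
    exact hf h1
  exact ⟨s.max' hsne, le_antisymm (s.le_max' _ h2) h1⟩

/-- For any partition `A × B = Ω_A ∪ Ω_B` of the outcomes of a
monotone bargaining scheme, exactly one of the following holds:
(a) Alice has a monotone nondecreasing strategy `x : A → B` with `(a, x a) ∈ Ω_A`
for all `a`; (b) Bob has a monotone nondecreasing strategy `y : B → A` with
`(y b, b) ∈ Ω_B` for all `b`. Hence every zero-sum `±1` monotone bargaining game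
is solvable and the monotone bargaining game form is tight. -/
theorem monotone_bargaining_pmOne_solvable
    {A B : Type*} [Fintype A] [Fintype B] [Nonempty A] [Nonempty B]
    [LinearOrder A] [LinearOrder B]
    (ΩA ΩB : Set (A × B))
    (hcover : ΩA ∪ ΩB = Set.univ) (hdisj : ΩA ∩ ΩB = ∅) :
    Xor'
      (∃ x : A → B, Monotone x ∧ ∀ a : A, (a, x a) ∈ ΩA)
      (∃ y : B → A, Monotone y ∧ ∀ b : B, (y b, b) ∈ ΩB) := by
  classical
  have hmem : ∀ p : A × B, p ∈ ΩA ∨ p ∈ ΩB := by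
    intro p
    have : p ∈ ΩA ∪ ΩB := by rw [hcover]; exact Set.mem_univ p
    exact this
  have hnot : ∀ p : A × B, p ∈ ΩA → p ∈ ΩB → False := by
    intro p h1 h2
    have : p ∈ ΩA ∩ ΩB := ⟨h1, h2⟩
    rw [hdisj] at this
    exact this
  -- "Not both" part
  have hnotboth : (∃ x : A → B, Monotone x ∧ ∀ a : A, (a, x a) ∈ ΩA) →
      (∃ y : B → A, Monotone y ∧ ∀ b : B, (y b, b) ∈ ΩB) → False := by
    rintro ⟨x, hx, hxA⟩ ⟨y, hy, hyB⟩
    obtain ⟨a0, hfix⟩ := monotone_bargaining_fixed_point (y ∘ x) (hy.comp hx)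
    have h1 : (a0, x a0) ∈ ΩA := hxA a0
    have h2 : (y (x a0), x a0) ∈ ΩB := hyB (x a0)
    rw [show y (x a0) = a0 from hfix] at h2
    exact hnot _ h1 h2
  -- Partial Alice positions
  set D : A → B → Prop := fun a b =>
    ∃ x : A → B, Monotone x ∧ (∀ a' ≤ a, (a', x a') ∈ ΩA) ∧ x a = b with hD_def
  -- extension lemma
  have hext : ∀ a b, (a, b) ∈ ΩA → (∀ c, c < a → ∃ b', b' ≤ b ∧ D c b') → D a b := by
    intro a b hab h
    by_cases hP : (Finset.univ.filter (fun c => c < a)).Nonempty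
    · set a' := (Finset.univ.filter (fun c => c < a)).max' hP with ha'
      have ha'lt : a' < a :=
        (Finset.mem_filter.mp ((Finset.univ.filter (fun c => c < a)).max'_mem hP)).2
      obtain ⟨b', hb'le, x', hx'mono, hx'A, hx'eq⟩ := h a' ha'lt
      have hle_a' : ∀ c, c < a → c ≤ a' := by
        intro c hc
        exact Finset.le_max' _ c (by simpa using hc)
      refine ⟨fun c => if c < a then x' c else b, ?_, ?_, ?_⟩
      · intro c d hcd
        by_cases h1 : c < a
        · by_cases h2 : d < a
          · simpa [h1, h2] using hx'mono hcd
          · have : x' c ≤ b' := by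
              rw [← hx'eq]; exact hx'mono (hle_a' c h1)
            simpa [h1, h2] using this.trans hb'le
        · have h2 : ¬ d < a := fun hd => h1 (lt_of_le_of_lt hcd hd)
          simp [h1, h2]
      · intro c hc
        by_cases h1 : c < a
        · simpa [h1] using hx'A c (hle_a' c h1)
        · have : c = a := le_antisymm hc (not_lt.mp h1)
          subst this
          simpa [h1] using hab
      · simp
    · refine ⟨fun _ => b, monotone_const, ?_, rfl⟩
      intro c hc
      have : c = a := by
        rcases lt_or_eq_of_le hc with h | h
        · exact absurd ⟨c, by simpa using h⟩ hP
        · exact h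
      subst this
      exact hab
  rcases em (∃ x : A → B, Monotone x ∧ ∀ a : A, (a, x a) ∈ ΩA) with hA | hA
  · exact Or.inl ⟨hA, fun hB => hnotboth hA hB⟩
  · refine Or.inr ⟨?_, hA⟩
    -- construct Bob's winning strategy
    set S' : Finset A := Finset.univ.filter (fun a => ¬ ∃ b, D a b) with hS'
    have htopmem : (Finset.univ : Finset A).max' Finset.univ_nonempty ∈ S' := by
      simp only [hS', Finset.mem_filter, Finset.mem_univ, true_and]
      rintro ⟨b, x, hx, hxA, -⟩
      exact hA ⟨x, hx, fun a => hxA a (Finset.le_max' _ a (Finset.mem_univ a))⟩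
    have hS'ne : S'.Nonempty := ⟨_, htopmem⟩
    set astar := S'.min' hS'ne with hastar
    have hstar : ¬ ∃ b, D astar b :=
      (Finset.mem_filter.mp (S'.min'_mem hS'ne)).2
    have hlt : ∀ a, a < astar → ∃ b, D a b := by
      intro a ha
      by_contra h
      have : a ∈ S' := Finset.mem_filter.mpr ⟨Finset.mem_univ a, h⟩
      exact absurd (S'.min'_le a this) (not_le.mpr ha)
    have ht0 : ∀ a, ∃ b, a < astar → (D a b ∧ ∀ b', D a b' → b ≤ b') := by
      intro a
      by_cases h : a < astar
      · obtain ⟨b, hb⟩ := hlt a h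
        have hne : (Finset.univ.filter (fun b => D a b)).Nonempty :=
          ⟨b, by simpa using hb⟩
        refine ⟨(Finset.univ.filter (fun b => D a b)).min' hne, fun _ => ⟨?_, ?_⟩⟩
        · have := (Finset.univ.filter (fun b => D a b)).min'_mem hne
          simpa using this
        · intro b' hb'
          exact Finset.min'_le _ b' (by simpa using hb')
      · exact ⟨Classical.arbitrary B, fun h' => absurd h' h⟩
    choose t ht using ht0
    -- Bob's strategy
    have hymemne : ∀ b : B,
        (Finset.univ.filter (fun a => a = astar ∨ (a < astar ∧ b < t a))).Nonempty :=
      fun b => ⟨astar, by simp⟩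
    set y : B → A := fun b =>
      (Finset.univ.filter (fun a => a = astar ∨ (a < astar ∧ b < t a))).min' (hymemne b)
      with hy_def
    have hyprop : ∀ b, y b = astar ∨ (y b < astar ∧ b < t (y b)) := by
      intro b
      exact (Finset.mem_filter.mp (Finset.min'_mem _ (hymemne b))).2
    have hymin : ∀ b c, (c = astar ∨ (c < astar ∧ b < t c)) → y b ≤ c := by
      intro b c hc
      exact Finset.min'_le _ c (Finset.mem_filter.mpr ⟨Finset.mem_univ c, hc⟩)
    refine ⟨y, ?_, ?_⟩
    · intro b b' hbb'
      rcases hyprop b' with h | h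
      · exact hymin b _ (Or.inl h)
      · exact hymin b _ (Or.inr ⟨h.1, lt_of_le_of_lt hbb' h.2⟩)
    · intro b
      by_contra h
      have haA : (y b, b) ∈ ΩA := (hmem _).resolve_right h
      have hcb : ∀ c, c < y b → c < astar ∧ t c ≤ b := by
        intro c hc
        have hcstar : c < astar := by
          rcases hyprop b with h1 | h1
          · rwa [← h1]
          · exact hc.trans h1.1
        refine ⟨hcstar, ?_⟩
        by_contra hle
        have := hymin b c (Or.inr ⟨hcstar, not_le.mp hle⟩)
        exact absurd hc (not_lt.mpr this)
      have hD : D (y b) b := by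
        refine hext _ _ haA ?_
        intro c hc
        obtain ⟨hcstar, hcle⟩ := hcb c hc
        exact ⟨t c, hcle, (ht c hcstar).1⟩
      rcases hyprop b with h1 | h1
      · exact hstar ⟨b, h1 ▸ hD⟩
      · exact absurd ((ht (y b) h1.1).2 b hD) (not_le.mpr h1.2)
end

section
/- Consider a deterministic graphical game structure: a finite digraph Γ = (V, E) with an initial position v_0 and V partitioned into V_A and V_B (non-terminal positions of positive out-degree controlled by Alice and Bob, respectively) and the set V_T of terminal positions (out-degree zero). A positional strategy of Alice assigns to each v ∈ V_A an out-neighbor of v, and similarly for Bob. Each pair of strategies (x, y) determines a unique play from v_0, which either reaches a terminal of V_T or is infinite; the set of outcomes is Ω = V_T ∪ {c}, where all infinite plays yield the single outcome c. Then for every partition Ω = Ω_A ∪ Ω_B, exactly one of the following holds: Alice has a positional strategy x such that for every strategy y of Bob the outcome of the play determined by (x, y) lies in Ω_A, or Bob has a positional strategy y such that for every strategy x of Alice the outcome lies in Ω_B. In particular, the game form of a deterministic graphical game structure is ±1-solvable (and hence tight). -/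
open Classical in
/-- One step of the play determined by the positional strategies `x` of Alice and
`y` of Bob: in a position of `V_A` Alice moves, in a position of `V_B` Bob moves,
and any other position (a terminal) is absorbing. -/
noncomputable def playStep {V : Type*} (VA VB : Set V) (x y : V → V) (v : V) : V :=
  if v ∈ VA then x v else if v ∈ VB then y v else v

open Classical in
/-- The outcome of the play determined by `(x, y)` from the initial position `v0`:
`some t` for the terminal `t ∈ V_T` reached by the play, and `none` (the single
outcome `c`) if the play never reaches a terminal, i.e., is infinite. -/
noncomputable def playOutcome {V : Type*} (VA VB VT : Set V) (x y : V → V) (v0 : V) :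
    Option V :=
  if h : ∃ n : ℕ, (playStep VA VB x y)^[n] v0 ∈ VT then
    some ((playStep VA VB x y)^[Nat.find h] v0)
  else none

namespace DGGSAux

open Classical

variable {V : Type*}

lemma playStep_comm (VA VB : Set V) (hAB : VA ∩ VB = ∅) (x y : V → V) :
    playStep VA VB x y = playStep VB VA y x := by
  funext v
  unfold playStep
  by_cases h1 : v ∈ VA <;> by_cases h2 : v ∈ VB
  · exact absurd (Set.mem_inter h1 h2) (by simp [hAB])
  all_goals simp [h1, h2]

lemma playOutcome_comm (VA VB VT : Set V) (hAB : VA ∩ VB = ∅) (x y : V → V) (v0 : V) :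
    playOutcome VA VB VT x y v0 = playOutcome VB VA VT y x v0 := by
  unfold playOutcome
  rw [playStep_comm VA VB hAB x y]

lemma playOutcome_terminal (VA VB VT : Set V) (x y : V → V) (v : V) (hv : v ∈ VT) :
    playOutcome VA VB VT x y v = some v := by
  have h : ∃ n : ℕ, (playStep VA VB x y)^[n] v ∈ VT := ⟨0, hv⟩
  unfold playOutcome
  rw [dif_pos h]
  have h0 : Nat.find h = 0 := (Nat.find_eq_zero h).mpr hv
  rw [h0]
  rfl

lemma playOutcome_step (VA VB VT : Set V) (x y : V → V) (v : V) (hv : v ∉ VT) :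
    playOutcome VA VB VT x y v = playOutcome VA VB VT x y (playStep VA VB x y v) := by
  unfold playOutcome
  set f := playStep VA VB x y with hf
  by_cases h : ∃ n, f^[n] v ∈ VT
  · have h' : ∃ n, f^[n] (f v) ∈ VT := by
      obtain ⟨n, hn⟩ := h
      cases n with
      | zero => exact absurd hn hv
      | succ m => exact ⟨m, by rw [← Function.iterate_succ_apply]; exact hn⟩
    rw [dif_pos h, dif_pos h']
    have key : Nat.find h = Nat.find h' + 1 := by
      apply le_antisymm
      · apply Nat.find_le
        rw [Function.iterate_succ_apply]
        exact Nat.find_spec h'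
      · have h0 : Nat.find h ≠ 0 := by
          intro h0
          have := Nat.find_spec h
          rw [h0] at this
          exact hv this
        obtain ⟨m, hm⟩ := Nat.exists_eq_succ_of_ne_zero h0
        rw [hm, Nat.succ_le_succ_iff]
        apply Nat.find_le
        rw [← Function.iterate_succ_apply]
        have := Nat.find_spec h
        rw [hm] at this
        exact this
    rw [key, Function.iterate_succ_apply]
  · have h' : ¬∃ n, f^[n] (f v) ∈ VT := by
      rintro ⟨n, hn⟩
      exact h ⟨n + 1, by rw [Function.iterate_succ_apply]; exact hn⟩
    rw [dif_neg h, dif_neg h']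

/-- The `n`-th stage of Alice's attractor to the target set `T`. -/
def attr (E : V → V → Prop) (VA VB T : Set V) : ℕ → Set V
  | 0 => T
  | n + 1 => attr E VA VB T n
      ∪ {v | v ∈ VA ∧ ∃ u, E v u ∧ u ∈ attr E VA VB T n}
      ∪ {v | v ∈ VB ∧ ∀ u, E v u → u ∈ attr E VA VB T n}

lemma attr_mono (E : V → V → Prop) (VA VB T : Set V) {m n : ℕ} (h : m ≤ n) :
    attr E VA VB T m ⊆ attr E VA VB T n := by
  induction h with
  | refl => exact subset_rfl
  | step h ih => exact ih.trans (by intro v hv; exact Or.inl (Or.inl hv))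

lemma one_side [Fintype V] (E : V → V → Prop) (v0 : V)
    (VA VB VT : Set V)
    (hVT : VT = {v | ∀ u, ¬ E v u})
    (hcover : VA ∪ VB ∪ VT = Set.univ)
    (hAB : VA ∩ VB = ∅) (hAT : VA ∩ VT = ∅) (hBT : VB ∩ VT = ∅)
    (ΩA ΩB : Set (Option V))
    (hΩcover : ΩA ∪ ΩB = {o : Option V | o = none ∨ ∃ t ∈ VT, o = some t})
    (hc : (none : Option V) ∈ ΩB) :
    (∃ x : V → V, (∀ v ∈ VA, E v (x v)) ∧
        ∀ y : V → V, (∀ v ∈ VB, E v (y v)) →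
          playOutcome VA VB VT x y v0 ∈ ΩA) ∨
    (∃ y : V → V, (∀ v ∈ VB, E v (y v)) ∧
        ∀ x : V → V, (∀ v ∈ VA, E v (x v)) →
          playOutcome VA VB VT x y v0 ∈ ΩB) := by
  -- target set for Alice
  set T : Set V := {t | t ∈ VT ∧ some t ∈ ΩA} with hT
  set A : ℕ → Set V := attr E VA VB T with hA
  set Attr : Set V := {v | ∃ n, v ∈ A n} with hAttr
  have hsucc : ∀ v ∉ VT, ∃ u, E v u := by
    intro v hv
    rw [hVT] at hv
    simpa using hv
  have hnotAT : ∀ v ∈ VA, v ∉ VT := by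
    intro v hv hvt
    exact absurd (Set.mem_inter hv hvt) (by simp [hAT])
  have hnotBT : ∀ v ∈ VB, v ∉ VT := by
    intro v hv hvt
    exact absurd (Set.mem_inter hv hvt) (by simp [hBT])
  have hnotABmem : ∀ v ∈ VA, v ∉ VB := by
    intro v hv hvb
    exact absurd (Set.mem_inter hv hvb) (by simp [hAB])
  -- members of A n that are terminals are in T
  have hAT' : ∀ n, ∀ v ∈ A n, v ∈ VT → v ∈ T := by
    intro n
    induction n with
    | zero => intro v hv _; exact hv
    | succ m ih =>
      intro v hv hvt
      rcases hv with (hv | hv) | hv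
      · exact ih v hv hvt
      · exact absurd hvt (hnotAT v hv.1)
      · exact absurd hvt (hnotBT v hv.1)
  -- the rank function
  set rank : V → ℕ := fun v => sInf {n | v ∈ A n} with hrank
  have hrank_mem : ∀ v ∈ Attr, v ∈ A (rank v) := by
    rintro v ⟨n, hn⟩
    exact Nat.sInf_mem ⟨n, show n ∈ {n | v ∈ A n} from hn⟩
  have hrank_le : ∀ v n, v ∈ A n → rank v ≤ n := fun v n hn => Nat.sInf_le (show n ∈ {n | v ∈ A n} from hn)
  have hrank_lt : ∀ v n, n < rank v → v ∉ A n := by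
    intro v n hn hv
    exact absurd (hrank_le v n hv) (by omega)
  by_cases hv0 : v0 ∈ Attr
  · -- Alice wins
    left
    set x : V → V := fun v =>
      if h : ∃ u, E v u ∧ ∃ m, m < rank v ∧ u ∈ A m then h.choose
      else if h2 : ∃ u, E v u then h2.choose else v with hx
    have hxlegal : ∀ v ∈ VA, E v (x v) := by
      intro v hv
      rw [hx]
      dsimp only
      split_ifs with h h2
      · exact h.choose_spec.1
      · exact h2.choose_spec
      · exact absurd (hsucc v (hnotAT v hv)) h2
    have hxdec : ∀ v ∈ VA, v ∈ Attr → x v ∈ Attr ∧ rank (x v) < rank v := by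
      intro v hv hvA
      have hvr := hrank_mem v hvA
      have hr0 : rank v ≠ 0 := by
        intro h0
        rw [h0] at hvr
        exact hnotAT v hv (hvr.1)
      obtain ⟨k, hk⟩ := Nat.exists_eq_succ_of_ne_zero hr0
      have hvk : v ∉ A k := hrank_lt v k (by omega)
      rw [hk] at hvr
      rcases hvr with (hvr | hvr) | hvr
      · exact absurd hvr hvk
      · -- v ∈ VA part
        obtain ⟨_, u, hu, huk⟩ := hvr
        have hpred : ∃ u, E v u ∧ ∃ m, m < rank v ∧ u ∈ A m :=
          ⟨u, hu, k, by omega, huk⟩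
        rw [hx]
        dsimp only
        rw [dif_pos hpred]
        obtain ⟨hE, m, hm, hmem⟩ := hpred.choose_spec
        exact ⟨⟨m, hmem⟩, lt_of_le_of_lt (hrank_le _ m hmem) hm⟩
      · exact absurd hvr.1 (hnotABmem v hv)
    refine ⟨x, hxlegal, ?_⟩
    intro y hy
    -- main induction on rank
    have main : ∀ n, ∀ v ∈ Attr, rank v ≤ n → playOutcome VA VB VT x y v ∈ ΩA := by
      intro n
      induction n with
      | zero =>
        intro v hvA hr
        have hvr := hrank_mem v hvA
        rw [Nat.le_zero.mp hr] at hvr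
        -- v ∈ A 0 = T
        rw [playOutcome_terminal VA VB VT x y v hvr.1]
        exact hvr.2
      | succ n ih =>
        intro v hvA hr
        by_cases hvt : v ∈ VT
        · have hvT : v ∈ T := hAT' _ v (hrank_mem v hvA) hvt
          rw [playOutcome_terminal VA VB VT x y v hvT.1]
          exact hvT.2
        · rw [playOutcome_step VA VB VT x y v hvt]
          have hvAB : v ∈ VA ∪ VB := by
            have : v ∈ VA ∪ VB ∪ VT := by rw [hcover]; trivial
            rcases this with h | h
            · exact h
            · exact absurd h hvt
          rcases hvAB with hva | hvb
          · have hstep : playStep VA VB x y v = x v := by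
              unfold playStep; rw [if_pos hva]
            rw [hstep]
            obtain ⟨hmem, hlt⟩ := hxdec v hva hvA
            exact ih (x v) hmem (by omega)
          · have hstep : playStep VA VB x y v = y v := by
              unfold playStep
              rw [if_neg (fun h => hnotABmem v h hvb), if_pos hvb]
            rw [hstep]
            have hvr := hrank_mem v hvA
            have hr0 : rank v ≠ 0 := by
              intro h0
              rw [h0] at hvr
              exact hvt hvr.1
            obtain ⟨k, hk⟩ := Nat.exists_eq_succ_of_ne_zero hr0
            have hvk : v ∉ A k := hrank_lt v k (by omega)
            rw [hk] at hvr
            rcases hvr with (hvr | hvr) | hvr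
            · exact absurd hvr hvk
            · exact absurd hvr.1 (fun h => hnotABmem v h hvb)
            · have hyk : y v ∈ A k := hvr.2 (y v) (hy v hvb)
              exact ih (y v) ⟨k, hyk⟩ (by
                have := hrank_le (y v) k hyk
                omega)
    exact main (rank v0) v0 hv0 le_rfl
  · -- Bob wins
    right
    set y : V → V := fun v =>
      if h : ∃ u, E v u ∧ u ∉ Attr then h.choose
      else if h2 : ∃ u, E v u then h2.choose else v with hy
    have hylegal : ∀ v ∈ VB, E v (y v) := by
      intro v hv
      rw [hy]
      dsimp only
      split_ifs with h h2
      · exact h.choose_spec.1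
      · exact h2.choose_spec
      · exact absurd (hsucc v (hnotBT v hv)) h2
    -- a Bob position outside the attractor has an escape
    have hBesc : ∀ v ∈ VB, v ∉ Attr → y v ∉ Attr := by
      intro v hv hvA
      have hpred : ∃ u, E v u ∧ u ∉ Attr := by
        by_contra hcon
        push_neg at hcon
        -- all successors are in Attr; find a uniform level
        set s : Finset V := Finset.univ.filter (fun u => E v u) with hs
        set N : ℕ := s.sup rank with hN
        have hall : ∀ u, E v u → u ∈ A N := by
          intro u hu
          have huA : u ∈ Attr := hcon u hu
          have hus : u ∈ s := by simp [hs, hu]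
          have : rank u ≤ N := Finset.le_sup hus
          exact attr_mono E VA VB T this (hrank_mem u huA)
        exact hvA ⟨N + 1, Or.inr ⟨hv, hall⟩⟩
      rw [hy]
      dsimp only
      rw [dif_pos hpred]
      exact hpred.choose_spec.2
    refine ⟨y, hylegal, ?_⟩
    intro x hx
    set f : V → V := playStep VA VB x y with hf
    have hinv : ∀ n, f^[n] v0 ∉ Attr := by
      intro n
      induction n with
      | zero => exact hv0
      | succ m ih =>
        rw [Function.iterate_succ_apply']
        set w : V := f^[m] v0 with hw
        show f w ∉ Attr
        by_cases hwa : w ∈ VA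
        · have hstep : f w = x w := by
            rw [hf]; unfold playStep; rw [if_pos hwa]
          rw [hstep]
          intro hxA
          obtain ⟨k, hk⟩ := hxA
          exact ih ⟨k + 1, Or.inl (Or.inr ⟨hwa, x w, hx w hwa, hk⟩)⟩
        · by_cases hwb : w ∈ VB
          · have hstep : f w = y w := by
              rw [hf]; unfold playStep; rw [if_neg hwa, if_pos hwb]
            rw [hstep]
            exact hBesc w hwb ih
          · have hstep : f w = w := by
              rw [hf]; unfold playStep; rw [if_neg hwa, if_neg hwb]
            rw [hstep]
            exact ih
    -- conclude
    unfold playOutcome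
    rw [← hf]
    by_cases h : ∃ n, f^[n] v0 ∈ VT
    · rw [dif_pos h]
      set t : V := f^[Nat.find h] v0 with ht'
      have htT : t ∈ VT := Nat.find_spec h
      have htA : t ∉ Attr := hinv _
      have htnT : t ∉ T := fun hT' => htA ⟨0, hT'⟩
      have homega : some t ∈ ΩA ∪ ΩB := by
        rw [hΩcover]
        exact Or.inr ⟨t, htT, rfl⟩
      rcases homega with hA' | hB'
      · exact absurd ⟨htT, hA'⟩ htnT
      · exact hB'
    · rw [dif_neg h]
      exact hc

end DGGSAux

/-- In a deterministic graphical game structure (finite digraph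
`E` on `V = V_A ∪ V_B ∪ V_T`, terminals `V_T` = positions of out-degree zero,
outcomes `Ω = V_T ∪ {c}` where `c = none` stands for all infinite plays), for
every partition `Ω = Ω_A ∪ Ω_B` exactly one of the players has a positional
strategy winning against every positional strategy of the opponent. In
particular, the game form of a DGGS is `±1`-solvable (hence tight). -/
theorem dggs_pmOne_solvable
    {V : Type*} [Fintype V] (E : V → V → Prop) (v0 : V)
    (VA VB VT : Set V)
    (hVT : VT = {v | ∀ u, ¬ E v u})
    (hcover : VA ∪ VB ∪ VT = Set.univ)
    (hAB : VA ∩ VB = ∅) (hAT : VA ∩ VT = ∅) (hBT : VB ∩ VT = ∅)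
    (ΩA ΩB : Set (Option V))
    (hΩcover : ΩA ∪ ΩB = {o : Option V | o = none ∨ ∃ t ∈ VT, o = some t})
    (hΩdisj : ΩA ∩ ΩB = ∅) :
    Xor'
      (∃ x : V → V, (∀ v ∈ VA, E v (x v)) ∧
        ∀ y : V → V, (∀ v ∈ VB, E v (y v)) →
          playOutcome VA VB VT x y v0 ∈ ΩA)
      (∃ y : V → V, (∀ v ∈ VB, E v (y v)) ∧
        ∀ x : V → V, (∀ v ∈ VA, E v (x v)) →
          playOutcome VA VB VT x y v0 ∈ ΩB) := by
  have hor :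
      (∃ x : V → V, (∀ v ∈ VA, E v (x v)) ∧
        ∀ y : V → V, (∀ v ∈ VB, E v (y v)) →
          playOutcome VA VB VT x y v0 ∈ ΩA) ∨
      (∃ y : V → V, (∀ v ∈ VB, E v (y v)) ∧
        ∀ x : V → V, (∀ v ∈ VA, E v (x v)) →
          playOutcome VA VB VT x y v0 ∈ ΩB) := by
    have hnone : (none : Option V) ∈ ΩA ∪ ΩB := by
      rw [hΩcover]; exact Or.inl rfl
    rcases hnone with hA' | hB'
    · -- `none ∈ ΩA`: apply the one-sided lemma with the roles swapped
      have h := DGGSAux.one_side E v0 VB VA VT hVT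
        (by rw [Set.union_comm VB VA]; exact hcover)
        (by rw [Set.inter_comm]; exact hAB) hBT hAT ΩB ΩA
        (by rw [Set.union_comm]; exact hΩcover) hA'
      rcases h with ⟨yb, hyb, hwin⟩ | ⟨xa, hxa, hwin⟩
      · right
        refine ⟨yb, hyb, fun x hx => ?_⟩
        rw [DGGSAux.playOutcome_comm VA VB VT hAB x yb]
        exact hwin x hx
      · left
        refine ⟨xa, hxa, fun y hy => ?_⟩
        rw [DGGSAux.playOutcome_comm VA VB VT hAB xa y]
        exact hwin y hy
    · exact DGGSAux.one_side E v0 VA VB VT hVT hcover hAB hAT hBT ΩA ΩB hΩcover hB'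
  have hnand : ¬ ((∃ x : V → V, (∀ v ∈ VA, E v (x v)) ∧
        ∀ y : V → V, (∀ v ∈ VB, E v (y v)) →
          playOutcome VA VB VT x y v0 ∈ ΩA) ∧
      (∃ y : V → V, (∀ v ∈ VB, E v (y v)) ∧
        ∀ x : V → V, (∀ v ∈ VA, E v (x v)) →
          playOutcome VA VB VT x y v0 ∈ ΩB)) := by
    rintro ⟨⟨x, hx, hwx⟩, ⟨y, hy, hwy⟩⟩
    have h1 := hwx y hy
    have h2 := hwy x hx
    have : playOutcome VA VB VT x y v0 ∈ ΩA ∩ ΩB := ⟨h1, h2⟩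
    rw [hΩdisj] at this
    exact this
  rcases hor with hP | hQ
  · exact Or.inl ⟨hP, fun hQ => hnand ⟨hP, hQ⟩⟩
  · exact Or.inr ⟨hQ, fun hP => hnand ⟨hP, hQ⟩⟩
end
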